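/- arXiv:1906.01585 — 6 statements merged into one kernel-verified Lean document; each statement's English description precedes it below -/
import Mathlib

section
/- A subset S ⊆ ℕⁿ is a proportionally modular affine semigroup if and only if there exist two linear functions with integer coefficients f(x) = f₁x₁+⋯+fₙxₙ and d(x) = d₁x₁+⋯+dₙxₙ with f₁,…,fₙ ≥ 0, and an integer b > 0, such that S = ⋃_{i∈ℕ} (F_i⁺ ∩ D_i⁻) ∩ ℕⁿ, where F_i⁺ = {x ∈ ℝⁿ : f(x) ≥ ib} and D_i⁻ = {x ∈ ℝⁿ : d(x) ≤ ib}. -/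
/-!
Replacing each `fᵢ` by `fᵢ mod b` makes the coefficients nonnegative without changing
`f(x) mod b`. For `f(x) ≥ 0`, the inequality `f(x) mod b ≤ g(x)` says exactly that some
multiple `ib` lies in the interval `[f(x) - g(x), f(x)]`, so one takes `d = f - g`.
-/

open Finset

/-- Since `F / b` is the largest `i` with `i * b ≤ F`, and `F % b = F - (F / b) * b`. -/
theorem Int.emod_le_iff_exists_nat_mul {b F G : ℤ} (hb : 0 < b) (hF : 0 ≤ F) :
    F % b ≤ G ↔ ∃ i : ℕ, (i : ℤ) * b ≤ F ∧ F - G ≤ (i : ℤ) * b := by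
  have hmod : F % b = F - F / b * b := by rw [Int.emod_def, mul_comm]
  constructor
  · intro h
    refine ⟨(F / b).toNat, ?_, ?_⟩ <;>
      rw [Int.toNat_of_nonneg (Int.ediv_nonneg hF hb.le)]
    · exact Int.ediv_mul_le F hb.ne'
    · linarith
  · rintro ⟨i, hiF, hiG⟩
    have hi : (i : ℤ) ≤ F / b := Int.le_ediv_of_mul_le hb hiF
    nlinarith

theorem sum_emod_mul_modEq {ι : Type*} (s : Finset ι) (f x : ι → ℤ) (b : ℤ) :
    ∑ j ∈ s, f j % b * x j ≡ ∑ j ∈ s, f j * x j [ZMOD b] :=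
  Int.ModEq.sum fun j _ => (Int.mod_modEq (f j) b).mul_right (x j)

theorem setOf_emod_le_eq_setOf_exists {n : ℕ} {f : Fin n → ℤ} (hf : ∀ i, 0 ≤ f i)
    (g : Fin n → ℤ) {b : ℤ} (hb : 0 < b) :
    {x : Fin n → ℕ | (∑ i, f i * (x i : ℤ)) % b ≤ ∑ i, g i * (x i : ℤ)} =
      {x : Fin n → ℕ | ∃ i : ℕ, (i : ℤ) * b ≤ ∑ j, f j * (x j : ℤ) ∧
        ∑ j, (f j - g j) * (x j : ℤ) ≤ (i : ℤ) * b} := by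
  ext x
  have hF : 0 ≤ ∑ j, f j * (x j : ℤ) :=
    sum_nonneg fun j _ => mul_nonneg (hf j) (Int.natCast_nonneg _)
  simp only [Set.mem_ofPred_eq, sub_mul, sum_sub_distrib, Int.emod_le_iff_exists_nat_mul hb hF]

theorem setOf_emod_le_eq_emod_coeffs {n : ℕ} (f g : Fin n → ℤ) (b : ℤ) :
    {x : Fin n → ℕ | (∑ i, f i * (x i : ℤ)) % b ≤ ∑ i, g i * (x i : ℤ)} =
      {x : Fin n → ℕ | (∑ i, f i % b * (x i : ℤ)) % b ≤ ∑ i, g i * (x i : ℤ)} := by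
  ext x
  simp only [Set.mem_ofPred_eq, (sum_emod_mul_modEq univ f (fun i => (x i : ℤ)) b).eq]

/-- **Theorem (geometrical characterization of proportionally modular affine semigroups).**
`S ⊆ ℕⁿ` is a proportionally modular affine semigroup (the set of nonnegative integer
solutions of `f₁x₁+⋯+fₙxₙ mod b ≤ g₁x₁+⋯+gₙxₙ`) if and only if there exist linear functions
with integer coefficients `f` and `d`, with `fᵢ ≥ 0`, and an integer `b > 0`, such that
`S = ⋃_{i∈ℕ} (Fᵢ⁺ ∩ Dᵢ⁻) ∩ ℕⁿ`, where `Fᵢ⁺ = {x : f(x) ≥ ib}` and `Dᵢ⁻ = {x : d(x) ≤ ib}`. -/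
theorem stmt0 (n : ℕ) (S : Set (Fin n → ℕ)) :
    (∃ (f g : Fin n → ℤ) (b : ℤ), 0 < b ∧
      S = {x : Fin n → ℕ | (∑ i, f i * (x i : ℤ)) % b ≤ ∑ i, g i * (x i : ℤ)}) ↔
    (∃ (f d : Fin n → ℤ) (b : ℤ), (∀ i, 0 ≤ f i) ∧ 0 < b ∧
      S = {x : Fin n → ℕ | ∃ i : ℕ, (i : ℤ) * b ≤ ∑ j, f j * (x j : ℤ) ∧
        ∑ j, d j * (x j : ℤ) ≤ (i : ℤ) * b}) := by
  constructor
  · rintro ⟨f, g, b, hb, rfl⟩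
    have hfb : ∀ i, 0 ≤ f i % b := fun i => Int.emod_nonneg _ hb.ne'
    exact ⟨fun i => f i % b, fun i => f i % b - g i, b, hfb, hb,
      (setOf_emod_le_eq_emod_coeffs f g b).trans (setOf_emod_le_eq_setOf_exists hfb g hb)⟩
  · rintro ⟨f, d, b, hf, hb, rfl⟩
    refine ⟨f, fun i => f i - d i, b, hb, ?_⟩
    simp only [setOf_emod_le_eq_setOf_exists hf _ hb, sub_sub_cancel]
end

section
/- Let S be an ℕⁿ-semigroup with e_i ∉ S and S_i a proportionally modular numerical semigroup for all i ∈ [n]. Then S is a proportionally modular affine semigroup if and only if for some tuple ([p̃₁,q̃₁],…,[p̃ₙ,q̃ₙ]) ∈ L̃_{S₁}×⋯×L̃_{Sₙ}, writing L̃ = {[p̃_i,q̃_i]} and L̂ = {]p̂_i,q̂_i[} for the associated maximal open intervals, one has ℕⁿ∖S ⊆ ⋃_{k=1}^{φ(L̃)} ℍ_{kL̃}, and there exist rational numbers p₁,…,pₙ,q₁,…,qₙ, with L = {[p₁,q₁],…,[pₙ,qₙ]}, satisfying: (1) for all i ∈ [n] such that [p̃_i,q̃_i] is a half-line interval, p̂_i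 < p_i ≤ p̃_i < q̃_i ≤ q_i, and in the other case p̂_i < p_i ≤ p̃_i < q̃_i ≤ q_i < q̂_i; (2) for all x ∈ VSet((ℕⁿ∖S) ∩ ℍ_{1L̃}), h_{11L}(x) > 0, and for all k ∈ {2,…,φ(L̃)} and all x ∈ VSet((ℕⁿ∖S) ∩ ℍ_{kL̃}), h_{1kL}(x) > 0 and h_{2(k−1)L}(x) < 0; (3) for every s ∈ Λ_S with θ_{L̃}(s) = 0, κ_{L̂}(s) ≠ 0 and there exists an integer m with 1 ≤ m ≤ κ_{L̂}(s) such that h_{11L}(s/m) ≤ 0 and h_{21L}(s/m) ≥ 0 (i.e., s/m ∈ P_L). -/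
open Pointwise

noncomputable section

/-- The numerical semigroup `𝒮(I) = ⋃_{k∈ℕ} k·I ∩ ℕ` generated by a real interval `I`. -/
def NSet (I : Set ℝ) : Set ℕ := {m | ∃ k : ℕ, ∃ r ∈ I, (m : ℝ) = (k : ℝ) * r}

/-- An open interval of `ℝ`, possibly unbounded above (`q̂ = ∞`). -/
def IsOpenInterval (J : Set ℝ) : Prop := (∃ a c : ℝ, J = Set.Ioo a c) ∨ (∃ a : ℝ, J = Set.Ioi a)

/-- `[p,q]` is a minimal (closed) interval defining `T`. -/
def IsMinimalInterval (T : Set ℕ) (p q : ℝ) : Prop :=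
  1 < p ∧ p ≤ q ∧ T = NSet (Set.Icc p q) ∧
  ∀ p' q' : ℝ, 1 < p' → p' ≤ q' → T = NSet (Set.Icc p' q') →
    Set.Icc p' q' ⊆ Set.Icc p q → Set.Icc p' q' = Set.Icc p q

/-- `J = ]p̂,q̂[` is the maximal open interval containing `[p,q]` defining `T`. -/
def IsMaxOpenInterval (T : Set ℕ) (p q : ℝ) (J : Set ℝ) : Prop :=
  IsOpenInterval J ∧ Set.Icc p q ⊆ J ∧ NSet J = T ∧
  ∀ J' : Set ℝ, IsOpenInterval J' → Set.Icc p q ⊆ J' → NSet J' = T → J' ⊆ J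

/-- `[p,q]` (with `p > 1`) is a half-line interval: `𝒮([p,q']) = 𝒮([p,q])` for all `q' ≥ q`. -/
def IsHalfLineInterval (p q : ℝ) : Prop :=
  1 < p ∧ ∀ q' : ℝ, q ≤ q' → NSet (Set.Icc p q') = NSet (Set.Icc p q)

/-- `κ(r)`: the largest integer `k` with `k < r` (and `0` if `r ≤ 1`). -/
def kappa (r : ℝ) : ℤ := if r ≤ 1 then 0 else ⌈r⌉ - 1

def castV {n : ℕ} (x : Fin n → ℕ) : Fin n → ℝ := fun i => (x i : ℝ)

/-- The polytope `P_L = ConvexHull(⋃ᵢ {pᵢeᵢ, qᵢeᵢ})`. -/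
def PL {n : ℕ} (p q : Fin n → ℝ) : Set (Fin n → ℝ) :=
  convexHull ℝ (⋃ i, {Pi.single i (p i), Pi.single i (q i)})

/-- `h_{1kL}(x) = p₁⋯pₙ(k − Σⱼ xⱼ/pⱼ)`, resp. `h_{2kL}` on substituting `q` for `p`. -/
def hL {n : ℕ} (p : Fin n → ℝ) (k : ℝ) (x : Fin n → ℝ) : ℝ :=
  (∏ i, p i) * (k - ∑ i, x i / p i)

/-- `φ(L) = maxᵢ ⌈pᵢ/(qᵢ−pᵢ)⌉`. -/
def phiN {n : ℕ} (p q : Fin n → ℝ) : ℕ :=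
  Finset.univ.sup fun i => (⌈p i / (q i - p i)⌉).toNat

/-- `ℍ_{1L} = {x ∈ ℕⁿ : h_{11L}(x) > 0}` and, for `k ≥ 2`,
`ℍ_{kL} = {x ∈ ℕⁿ : h_{1kL}(x) > 0 ∧ h_{2(k−1)L}(x) < 0}`. -/
def Hset {n : ℕ} (p q : Fin n → ℝ) (k : ℕ) : Set (Fin n → ℕ) :=
  {x | if k = 1 then 0 < hL p 1 (castV x)
       else 0 < hL p (k : ℝ) (castV x) ∧ hL q ((k : ℝ) - 1) (castV x) < 0}

/-- `VSet(A)`: the vertex set (extreme points) of `ConvexHull(A)`. -/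
def VSet {E : Type*} [AddCommGroup E] [Module ℝ E] (A : Set E) : Set E :=
  (convexHull ℝ A).extremePoints ℝ

/-- `Sᵢ = {k ∈ ℕ : k·eᵢ ∈ S}`. -/
def Si {n : ℕ} (S : Set (Fin n → ℕ)) (i : Fin n) : Set ℕ := {k | Pi.single i k ∈ S}

/-- The minimal generating set `Λ_S`. -/
def MinGenM {M : Type*} [AddCommMonoid M] (S : Set M) : Set M :=
  {s | s ∈ S ∧ s ≠ 0 ∧ ∀ a ∈ S, ∀ b ∈ S, a ≠ 0 → b ≠ 0 → a + b ≠ s}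

variable {n : ℕ}

lemma NSet_mono {I I' : Set ℝ} (h : I ⊆ I') : NSet I ⊆ NSet I' := by
  rintro m ⟨k, r, hr, he⟩; exact ⟨k, r, h hr, he⟩

lemma zero_mem_NSet {I : Set ℝ} (h : I.Nonempty) : 0 ∈ NSet I := by
  obtain ⟨r, hr⟩ := h; exact ⟨0, r, hr, by simp⟩

lemma mem_NSet_Icc {u v : ℝ} (hu : 0 < u) (huv : u ≤ v) {m : ℕ} :
    m ∈ NSet (Set.Icc u v) ↔ ∃ k : ℕ, (k : ℝ) * u ≤ m ∧ (m : ℝ) ≤ k * v := by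
  constructor
  · rintro ⟨k, r, ⟨hr1, hr2⟩, he⟩
    exact ⟨k, by rw [he]; exact mul_le_mul_of_nonneg_left hr1 (Nat.cast_nonneg k),
      by rw [he]; exact mul_le_mul_of_nonneg_left hr2 (Nat.cast_nonneg k)⟩
  · rintro ⟨k, h1, h2⟩
    rcases Nat.eq_zero_or_pos m with hm | hm
    · exact ⟨0, u, ⟨le_refl u, huv⟩, by simp [hm]⟩
    · have hk : 0 < k := by
        rcases Nat.eq_zero_or_pos k with hk | hk
        · exfalso
          have : (m : ℝ) ≤ 0 := by simpa [hk] using h2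
          have : (0:ℝ) < m := by exact_mod_cast hm
          linarith
        · exact hk
      have hkR : (0:ℝ) < k := by exact_mod_cast hk
      refine ⟨k, (m : ℝ) / k, ⟨?_, ?_⟩, ?_⟩
      · rw [le_div_iff₀ hkR]; linarith [h1]
      · rw [div_le_iff₀ hkR]; linarith [h2]
      · field_simp

lemma key_mod {b A B : ℤ} (hb : 0 < b) (hA : 0 ≤ A) :
    A % b ≤ A - B ↔ ∃ k : ℕ, B ≤ (k : ℤ) * b ∧ (k : ℤ) * b ≤ A := by
  constructor
  · intro h
    refine ⟨(A / b).toNat, ?_, ?_⟩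
    · have h1 : A % b = A - b * (A / b) := Int.emod_def A b
      have h2 : (A / b).toNat = A / b := Int.toNat_of_nonneg (Int.ediv_nonneg hA hb.le)
      rw [h2]
      have : B ≤ b * (A / b) := by linarith [h, h1]
      linarith [this, mul_comm b (A / b)]
    · have h2 : ((A / b).toNat : ℤ) = A / b := Int.toNat_of_nonneg (Int.ediv_nonneg hA hb.le)
      rw [h2]
      exact Int.ediv_mul_le A hb.ne'
  · rintro ⟨k, h1, h2⟩
    have hk : (k : ℤ) ≤ A / b := by
      rw [Int.le_ediv_iff_mul_le hb]; exact h2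
    have h3 : A % b = A - b * (A / b) := Int.emod_def A b
    have h4 : b * (k : ℤ) ≤ b * (A / b) := mul_le_mul_of_nonneg_left hk hb.le
    have h5 : B ≤ b * (k:ℤ) := by linarith [mul_comm (k:ℤ) b]
    linarith


lemma aff_pos (t : Fin n → ℝ) (r : ℝ) (A : Set (Fin n → ℝ)) (hA : A.Finite)
    (h : ∀ v ∈ (convexHull ℝ A).extremePoints ℝ, 0 < r + ∑ i, v i * t i) :
    ∀ x ∈ A, 0 < r + ∑ i, x i * t i := by
  intro x hx
  set f : (Fin n → ℝ) → ℝ := fun y => r + ∑ i, y i * t i with hf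
  have hf_cont : Continuous f := by
    apply continuous_const.add
    exact continuous_finset_sum _ fun i _ => (continuous_apply i).mul continuous_const
  have haff : ∀ a b : Fin n → ℝ, ∀ θ σ : ℝ, θ + σ = 1 →
      f (θ • a + σ • b) = θ * f a + σ * f b := by
    intro a b θ σ hθσ
    simp only [hf, Pi.add_apply, Pi.smul_apply, smul_eq_mul]
    have : ∑ i, (θ * a i + σ * b i) * t i
        = θ * ∑ i, a i * t i + σ * ∑ i, b i * t i := by
      rw [Finset.mul_sum, Finset.mul_sum, ← Finset.sum_add_distrib]
      exact Finset.sum_congr rfl fun i _ => by ring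
    rw [this]
    have hr : θ * r + σ * r = r := by rw [← add_mul, hθσ, one_mul]
    ring_nf
    nlinarith [hr]
  have hhalf : ∀ c : ℝ, Convex ℝ {y : Fin n → ℝ | c ≤ f y} := by
    intro c a ha b hb θ σ hθ hσ hθσ
    have := haff a b θ σ hθσ
    simp only [Set.mem_setOf_eq] at ha hb ⊢
    rw [this]
    have h1 : θ * c + σ * c = c := by rw [← add_mul, hθσ, one_mul]
    linarith [mul_le_mul_of_nonneg_left ha hθ, mul_le_mul_of_nonneg_left hb hσ]
  have hclosed : ∀ c : ℝ, IsClosed {y : Fin n → ℝ | c ≤ f y} :=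
    fun c => isClosed_le continuous_const hf_cont
  set K := convexHull ℝ A with hK
  set B := K.extremePoints ℝ with hB
  have hBA : B ⊆ A := extremePoints_convexHull_subset
  have hBfin : B.Finite := hA.subset hBA
  have hKM : closure (convexHull ℝ B) = K :=
    closure_convexHull_extremePoints (hA.isCompact_convexHull (𝕜 := ℝ)) (convex_convexHull ℝ A)
  have hxK : x ∈ K := subset_convexHull ℝ A hx
  rcases B.eq_empty_or_nonempty with hBe | hBne
  · exfalso
    rw [hBe, convexHull_empty, closure_empty] at hKM
    rw [← hKM] at hxK
    exact hxK
  · obtain ⟨v₀, hv₀B, hv₀min⟩ := Set.exists_min_image B f hBfin hBne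
    have hc : 0 < f v₀ := h v₀ hv₀B
    have h1 : convexHull ℝ B ⊆ {y | f v₀ ≤ f y} :=
      convexHull_min (fun v hv => hv₀min v hv) (hhalf (f v₀))
    have h2 : closure (convexHull ℝ B) ⊆ {y | f v₀ ≤ f y} :=
      (hclosed (f v₀)).closure_subset_iff.mpr h1
    have hvx : f v₀ ≤ f x := h2 (hKM ▸ hxK)
    have : 0 < f x := lt_of_lt_of_le hc hvx
    simpa [hf] using this

lemma hL_eq (p : Fin n → ℝ) (k : ℝ) (x : Fin n → ℝ) :
    hL p k x = (∏ i, p i) * k + ∑ i, x i * (-(∏ j, p j) / p i) := by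
  unfold hL
  rw [mul_sub, Finset.mul_sum]
  have : ∀ i ∈ Finset.univ, (∏ j, p j) * (x i / p i) = -(x i * (-(∏ j, p j) / p i)) :=
    fun i _ => by ring
  rw [Finset.sum_congr rfl this, Finset.sum_neg_distrib]
  ring

lemma hL_pos_iff {p : Fin n → ℝ} (hp : ∀ i, 0 < p i) (k : ℝ) (x : Fin n → ℝ) :
    0 < hL p k x ↔ ∑ i, x i / p i < k := by
  have hP : 0 < ∏ i, p i := Finset.prod_pos fun i _ => hp i
  unfold hL
  constructor
  · intro h; nlinarith
  · intro h; nlinarith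

lemma hL_neg_iff {p : Fin n → ℝ} (hp : ∀ i, 0 < p i) (k : ℝ) (x : Fin n → ℝ) :
    hL p k x < 0 ↔ k < ∑ i, x i / p i := by
  have hP : 0 < ∏ i, p i := Finset.prod_pos fun i _ => hp i
  unfold hL
  constructor
  · intro h; nlinarith
  · intro h; nlinarith

lemma hL_nonpos_iff {p : Fin n → ℝ} (hp : ∀ i, 0 < p i) (k : ℝ) (x : Fin n → ℝ) :
    hL p k x ≤ 0 ↔ k ≤ ∑ i, x i / p i := by
  have hP : 0 < ∏ i, p i := Finset.prod_pos fun i _ => hp i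
  unfold hL
  constructor
  · intro h; nlinarith
  · intro h; nlinarith

lemma hL_nonneg_iff {p : Fin n → ℝ} (hp : ∀ i, 0 < p i) (k : ℝ) (x : Fin n → ℝ) :
    0 ≤ hL p k x ↔ ∑ i, x i / p i ≤ k := by
  have hP : 0 < ∏ i, p i := Finset.prod_pos fun i _ => hp i
  unfold hL
  constructor
  · intro h; nlinarith
  · intro h; nlinarith

lemma extend_pos {p : Fin n → ℝ} (hp : ∀ i, 0 < p i) (k : ℝ) (A : Set (Fin n → ℕ))
    (hA : A.Finite) (h : ∀ v ∈ VSet (castV '' A), 0 < hL p k v) :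
    ∀ x ∈ A, 0 < hL p k (castV x) := by
  intro x hx
  have := aff_pos (fun i => -(∏ j, p j) / p i) ((∏ i, p i) * k) (castV '' A) (hA.image _)
    (fun v hv => by rw [← hL_eq]; exact h v hv) (castV x) ⟨x, hx, rfl⟩
  rw [← hL_eq] at this
  exact this

lemma extend_neg {p : Fin n → ℝ} (hp : ∀ i, 0 < p i) (k : ℝ) (A : Set (Fin n → ℕ))
    (hA : A.Finite) (h : ∀ v ∈ VSet (castV '' A), hL p k v < 0) :
    ∀ x ∈ A, hL p k (castV x) < 0 := by
  intro x hx
  have key : ∀ y : Fin n → ℝ, hL p k y < 0 ↔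
      0 < (-((∏ i, p i) * k)) + ∑ i, y i * ((∏ j, p j) / p i) := by
    intro y
    rw [hL_eq]
    constructor
    · intro hy
      have : ∑ i, y i * (-(∏ j, p j) / p i) = -∑ i, y i * ((∏ j, p j) / p i) := by
        rw [← Finset.sum_neg_distrib]
        exact Finset.sum_congr rfl fun i _ => by ring
      rw [this] at hy; linarith
    · intro hy
      have : ∑ i, y i * (-(∏ j, p j) / p i) = -∑ i, y i * ((∏ j, p j) / p i) := by
        rw [← Finset.sum_neg_distrib]
        exact Finset.sum_congr rfl fun i _ => by ring
      rw [this]; linarith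
  rw [key]
  exact aff_pos (fun i => (∏ j, p j) / p i) (-((∏ i, p i) * k)) (castV '' A) (hA.image _)
    (fun v hv => (key v).mp (h v hv)) (castV x) ⟨x, hx, rfl⟩


lemma sum_single_int (c : Fin n → ℤ) (i : Fin n) (t : ℕ) :
    ∑ j, c j * ((Pi.single i t : Fin n → ℕ) j : ℤ) = c i * t := by
  rw [Finset.sum_eq_single i]
  · rw [Pi.single_eq_same]
  · intro j _ hj
    rw [Pi.single_eq_of_ne hj]
    simp
  · intro h; exact absurd (Finset.mem_univ i) h

lemma sum_single_div (u : Fin n → ℝ) (i : Fin n) (t : ℕ) :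
    ∑ j, ((Pi.single i t : Fin n → ℕ) j : ℝ) / u j = (t : ℝ) / u i := by
  rw [Finset.sum_eq_single i]
  · rw [Pi.single_eq_same]
  · intro j _ hj
    rw [Pi.single_eq_of_ne hj]
    simp
  · intro h; exact absurd (Finset.mem_univ i) h

/-- Division sum bridge: if `u i = b / F i` then `∑ x i / u i = (∑ F i * x i) / b`. -/

lemma sum_div_bridge (F : Fin n → ℤ) (b : ℤ) (hb : 0 < b) (hF : ∀ i, 0 < F i)
    (x : Fin n → ℕ) :
    ∑ i, (x i : ℝ) / ((b : ℝ) / (F i : ℝ)) = ((∑ i, F i * (x i : ℤ) : ℤ) : ℝ) / (b : ℝ) := by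
  have hbR : (0:ℝ) < b := by exact_mod_cast hb
  push_cast
  rw [Finset.sum_div]
  apply Finset.sum_congr rfl
  intro i _
  have hFi : (0:ℝ) < (F i : ℝ) := by exact_mod_cast hF i
  rw [div_div_eq_mul_div]
  ring

/-- The mod-inequality set in terms of existence of an intermediate multiple. -/

lemma mod_char (F G : Fin n → ℤ) (b : ℤ) (hb : 0 < b) (hF : ∀ i, 0 ≤ F i) (x : Fin n → ℕ) :
    ((∑ i, F i * (x i : ℤ)) % b ≤ ∑ i, (F i - G i) * (x i : ℤ)) ↔
      ∃ k : ℕ, (∑ i, G i * (x i : ℤ)) ≤ (k : ℤ) * b ∧ (k : ℤ) * b ≤ ∑ i, F i * (x i : ℤ) := by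
  have hA : 0 ≤ ∑ i, F i * (x i : ℤ) :=
    Finset.sum_nonneg fun i _ => mul_nonneg (hF i) (by positivity)
  have hsub : ∑ i, (F i - G i) * (x i : ℤ)
      = (∑ i, F i * (x i : ℤ)) - ∑ i, G i * (x i : ℤ) := by
    rw [← Finset.sum_sub_distrib]
    exact Finset.sum_congr rfl fun i _ => by ring
  rw [hsub]
  exact key_mod hb hA


lemma eps_open (T : Set ℕ) (u v : ℝ) (hu : 1 < u) (huv : u ≤ v)
    (hT : T = NSet (Set.Icc u v)) (hcof : {m : ℕ | m ∉ T}.Finite) :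
    ∃ ε : ℝ, 0 < ε ∧ 1 < u - ε ∧ T = NSet (Set.Ioo (u - ε) (v + ε)) := by
  classical
  set G := hcof.toFinset with hG
  set pen : ℕ → ℕ → ℝ := fun m k =>
    if (m : ℝ) / k < u then u - (m : ℝ) / k else if v < (m : ℝ) / k then (m : ℝ) / k - v else 1
    with hpen
  set pens : Finset ℝ :=
    insert (u - 1) (G.biUnion fun m => (Finset.range (m + 1)).image (pen m)) with hpens
  have hne : pens.Nonempty := ⟨u - 1, Finset.mem_insert_self _ _⟩
  have hpos : ∀ e ∈ pens, 0 < e := by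
    intro e he
    rcases Finset.mem_insert.mp he with h | h
    · subst h; linarith
    · obtain ⟨m, _, hm2⟩ := Finset.mem_biUnion.mp h
      obtain ⟨k, _, hk2⟩ := Finset.mem_image.mp hm2
      subst hk2
      simp only [hpen]
      split_ifs with h1 h2
      · linarith
      · linarith
      · norm_num
  set ε := pens.min' hne / 2 with hε
  have hmin_pos : 0 < pens.min' hne := hpos _ (pens.min'_mem hne)
  have hεpos : 0 < ε := by positivity
  have hεsmall : ε ≤ (u - 1) / 2 := by
    have := pens.min'_le (u - 1) (Finset.mem_insert_self _ _)
    rw [hε]; linarith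
  have hu1 : 1 < u - ε := by linarith
  refine ⟨ε, hεpos, hu1, ?_⟩
  apply Set.Subset.antisymm
  · rw [hT]
    exact NSet_mono (Set.Icc_subset_Ioo (by linarith) (by linarith))
  · rintro m ⟨k, r, ⟨hr1, hr2⟩, he⟩
    by_contra hmT
    have hmG : m ∈ G := by rw [hG, Set.Finite.mem_toFinset]; exact hmT
    have h0T : (0 : ℕ) ∈ T := by
      rw [hT]; exact zero_mem_NSet ⟨u, le_refl u, huv⟩
    have hm0 : m ≠ 0 := fun h => hmT (h ▸ h0T)
    have hr_gt1 : 1 < r := by linarith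
    have hk0 : k ≠ 0 := by
      intro h
      rw [h] at he
      simp at he
      exact hm0 (by exact_mod_cast he)
    have hkpos : (0:ℝ) < k := by
      have : 0 < k := Nat.pos_of_ne_zero hk0
      exact_mod_cast this
    have hkm : k ≤ m := by
      have h1 : (k : ℝ) < m := by
        calc (k:ℝ) = k * 1 := by ring
        _ < k * r := by exact mul_lt_mul_of_pos_left hr_gt1 hkpos
        _ = m := he.symm
      exact_mod_cast h1.le
    have hrmk : r = (m : ℝ) / k := by
      rw [eq_div_iff (ne_of_gt hkpos)]; linarith [he]
    have hemem : pen m k ∈ pens := by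
      rw [hpens]
      apply Finset.mem_insert_of_mem
      exact Finset.mem_biUnion.mpr ⟨m, hmG,
        Finset.mem_image.mpr ⟨k, Finset.mem_range.mpr (Nat.lt_succ_of_le hkm), rfl⟩⟩
    have hge : 2 * ε ≤ pen m k := by
      have := pens.min'_le _ hemem
      rw [hε]; linarith
    rw [hpen] at hge
    simp only at hge
    split_ifs at hge with h1 h2
    · rw [← hrmk] at h1 hge; linarith
    · rw [← hrmk] at h2 hge; linarith
    · push_neg at h1 h2
      rw [← hrmk] at h1 h2
      exact hmT (by rw [hT]; exact ⟨k, r, ⟨h1, h2⟩, he⟩)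

/-- A degenerate interval cannot define a cofinite set. -/

lemma not_cofinite_point (T : Set ℕ) (r : ℝ) (hr : 1 < r)
    (hT : T = NSet (Set.Icc r r)) (hcof : {m : ℕ | m ∉ T}.Finite) : False := by
  obtain ⟨M0, hM0⟩ := hcof.bddAbove
  have hmem : ∀ m : ℕ, M0 + 1 ≤ m → m ∈ T := by
    intro m hm
    by_contra h
    have := hM0 h
    omega
  obtain ⟨k1, r1, hr1, he1⟩ := hT ▸ hmem (M0 + 1) (le_refl _)
  obtain ⟨k2, r2, hr2, he2⟩ := hT ▸ hmem (M0 + 2) (by omega)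
  have hr1e : r1 = r := le_antisymm hr1.2 hr1.1
  have hr2e : r2 = r := le_antisymm hr2.2 hr2.1
  rw [hr1e] at he1
  rw [hr2e] at he2
  have hlt : (k1 : ℝ) < k2 := by
    have h2 : (k1 : ℝ) * r < k2 * r := by
      rw [← he1, ← he2]; push_cast; linarith
    exact lt_of_mul_lt_mul_right h2 (by linarith)
  have hk12 : k1 + 1 ≤ k2 := by exact_mod_cast Nat.succ_le_of_lt (by exact_mod_cast hlt)
  have h3 : (k1 : ℝ) * r + r ≤ k2 * r := by
    have hc : ((k1 : ℝ) + 1) ≤ k2 := by exact_mod_cast hk12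
    nlinarith
  have h4 : (k2 : ℝ) * r - k1 * r = 1 := by
    rw [← he1, ← he2]; push_cast; ring
  linarith


lemma exists_minimal_interval (T : Set ℕ) (a c : ℝ) (ha : 1 < a) (hac : a ≤ c)
    (hT : T = NSet (Set.Icc a c)) (hcof : {m : ℕ | m ∉ T}.Finite) :
    ∃ pt qt : ℝ, IsMinimalInterval T pt qt ∧ a ≤ pt ∧ pt < qt ∧ qt ≤ c := by
  classical
  have ha0 : (0:ℝ) < a := by linarith
  set D : Set ℝ := {q' | q' ∈ Set.Icc a c ∧ T = NSet (Set.Icc a q')} with hD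
  have hcD : c ∈ D := ⟨⟨hac, le_refl c⟩, hT⟩
  have hDne : D.Nonempty := ⟨c, hcD⟩
  have hDbb : BddBelow D := ⟨a, fun q' hq' => hq'.1.1⟩
  set qs := sInf D with hqs
  have haq : a ≤ qs := le_csInf hDne fun q' hq' => hq'.1.1
  have hqc : qs ≤ c := csInf_le hDbb hcD
  have hqsD : T = NSet (Set.Icc a qs) := by
    apply Set.Subset.antisymm
    · intro m hm
      rcases Nat.eq_zero_or_pos m with hm0 | hmpos
      · subst hm0; exact zero_mem_NSet ⟨a, le_refl a, haq⟩
      have hmR : (0:ℝ) < m := by exact_mod_cast hmpos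
      by_contra hcon
      rw [mem_NSet_Icc ha0 haq] at hcon
      push_neg at hcon
      have hW : ∀ k : ℕ, 0 < k → (k:ℝ) * a ≤ m → ∃ q' ∈ D, (k:ℝ) * q' < m := by
        intro k hk hka
        have hkR : (0:ℝ) < k := by exact_mod_cast hk
        have h1 : qs < (m:ℝ) / k := by
          rw [lt_div_iff₀ hkR]
          have := hcon k hka
          linarith [mul_comm qs (k:ℝ)]
        obtain ⟨q', hq'D, hq'⟩ := exists_lt_of_csInf_lt hDne h1
        refine ⟨q', hq'D, ?_⟩
        have := (lt_div_iff₀ hkR).mp hq'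
        linarith [mul_comm q' (k:ℝ)]
      choose! w hwD hwlt using hW
      set KF : Finset ℕ := (Finset.range (m+1)).filter (fun k => 0 < k ∧ (k:ℝ) * a ≤ m) with hKF
      have hmemKF : ∀ k : ℕ, (k:ℝ) * a ≤ m → (m:ℝ) ≤ k * c ∨ True → 0 < k → k ∈ KF := by
        intro k hka _ hk
        refine Finset.mem_filter.mpr ⟨Finset.mem_range.mpr ?_, hk, hka⟩
        have hkR : (0:ℝ) < k := by exact_mod_cast hk
        have : (k:ℝ) ≤ m := by nlinarith
        have : k ≤ m := by exact_mod_cast this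
        omega
      have hKFne : KF.Nonempty := by
        obtain ⟨k, hk1, hk2⟩ := (mem_NSet_Icc ha0 hac).mp (hT ▸ hm)
        have hk : 0 < k := by
          rcases Nat.eq_zero_or_pos k with h | h
          · exfalso; rw [h] at hk2; simp at hk2; linarith
          · exact h
        exact ⟨k, hmemKF k hk1 (Or.inr trivial) hk⟩
      set q2 := KF.inf' hKFne w with hq2
      obtain ⟨k₀, hk₀KF, hk₀eq⟩ := Finset.exists_mem_eq_inf' hKFne w
      have hk₀p := (Finset.mem_filter.mp hk₀KF).2
      have hq2D : q2 ∈ D := by rw [hq2, hk₀eq]; exact hwD k₀ hk₀p.1 hk₀p.2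
      have haq2 : a ≤ q2 := hq2D.1.1
      obtain ⟨k, hk1, hk2⟩ := (mem_NSet_Icc ha0 haq2).mp (hq2D.2 ▸ hm)
      have hk : 0 < k := by
        rcases Nat.eq_zero_or_pos k with h | h
        · exfalso; rw [h] at hk2; simp at hk2; linarith
        · exact h
      have hkKF : k ∈ KF := hmemKF k hk1 (Or.inr trivial) hk
      have hle : q2 ≤ w k := Finset.inf'_le w hkKF
      have hkR : (0:ℝ) ≤ k := by positivity
      have h5 : (k:ℝ) * q2 ≤ k * w k := mul_le_mul_of_nonneg_left hle hkR
      have h6 := hwlt k hk hk1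
      linarith
    · rw [hT]; exact NSet_mono (Set.Icc_subset_Icc (le_refl a) hqc)
  set D2 : Set ℝ := {p' | p' ∈ Set.Icc a qs ∧ T = NSet (Set.Icc p' qs)} with hD2
  have haD2 : a ∈ D2 := ⟨⟨le_refl a, haq⟩, hqsD⟩
  have hD2ne : D2.Nonempty := ⟨a, haD2⟩
  have hD2ba : BddAbove D2 := ⟨qs, fun p' hp' => hp'.1.2⟩
  set ps := sSup D2 with hps
  have hap : a ≤ ps := le_csSup hD2ba haD2
  have hpq : ps ≤ qs := csSup_le hD2ne fun p' hp' => hp'.1.2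
  have hps0 : (0:ℝ) < ps := by linarith
  have hpsD2 : T = NSet (Set.Icc ps qs) := by
    apply Set.Subset.antisymm
    · intro m hm
      rcases Nat.eq_zero_or_pos m with hm0 | hmpos
      · subst hm0; exact zero_mem_NSet ⟨ps, le_refl ps, hpq⟩
      have hmR : (0:ℝ) < m := by exact_mod_cast hmpos
      by_contra hcon
      rw [mem_NSet_Icc hps0 hpq] at hcon
      push_neg at hcon
      have hW : ∀ k : ℕ, 0 < k → (m:ℝ) ≤ k * qs → ∃ p' ∈ D2, (m:ℝ) < k * p' := by
        intro k hk hkq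
        have hkR : (0:ℝ) < k := by exact_mod_cast hk
        have hnps : (m:ℝ) < k * ps := by
          by_contra h'
          push_neg at h'
          exact absurd hkq (by linarith [hcon k h'])
        have h1 : (m:ℝ) / k < ps := by rw [div_lt_iff₀ hkR]; linarith [mul_comm ps (k:ℝ)]
        obtain ⟨p', hp'D, hp'⟩ := exists_lt_of_lt_csSup hD2ne h1
        refine ⟨p', hp'D, ?_⟩
        have := (div_lt_iff₀ hkR).mp hp'
        linarith [mul_comm p' (k:ℝ)]
      choose! w2 hw2D hw2lt using hW
      set KF2 : Finset ℕ := (Finset.range (m+1)).filter (fun k => 0 < k ∧ (m:ℝ) ≤ k * qs)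
        with hKF2
      have hmemKF2 : ∀ k : ℕ, 0 < k → (k:ℝ) ≤ m → (m:ℝ) ≤ k * qs → k ∈ KF2 := by
        intro k hk hkm hkq
        refine Finset.mem_filter.mpr ⟨Finset.mem_range.mpr ?_, hk, hkq⟩
        have : k ≤ m := by exact_mod_cast hkm
        omega
      have hKF2ne : KF2.Nonempty := by
        obtain ⟨k, hk1, hk2⟩ := (mem_NSet_Icc ha0 haq).mp (hqsD ▸ hm)
        have hk : 0 < k := by
          rcases Nat.eq_zero_or_pos k with h | h
          · exfalso; rw [h] at hk2; simp at hk2; linarith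
          · exact h
        have hkR : (0:ℝ) < k := by exact_mod_cast hk
        have hkm : (k:ℝ) ≤ m := by nlinarith
        exact ⟨k, hmemKF2 k hk hkm hk2⟩
      set p2 := KF2.sup' hKF2ne w2 with hp2
      obtain ⟨k₀, hk₀KF, hk₀eq⟩ := Finset.exists_mem_eq_sup' hKF2ne w2
      have hk₀p := (Finset.mem_filter.mp hk₀KF).2
      have hp2D : p2 ∈ D2 := by rw [hp2, hk₀eq]; exact hw2D k₀ hk₀p.1 hk₀p.2
      have hap2 : a ≤ p2 := hp2D.1.1
      have hp2q : p2 ≤ qs := hp2D.1.2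
      have hp20 : (0:ℝ) < p2 := by linarith
      obtain ⟨k, hk1, hk2⟩ := (mem_NSet_Icc hp20 hp2q).mp (hp2D.2 ▸ hm)
      have hk : 0 < k := by
        rcases Nat.eq_zero_or_pos k with h | h
        · exfalso; rw [h] at hk2; simp at hk2; linarith
        · exact h
      have hkR : (0:ℝ) < k := by exact_mod_cast hk
      have hkm : (k:ℝ) ≤ m := by nlinarith
      have hkKF : k ∈ KF2 := hmemKF2 k hk hkm hk2
      have hle : w2 k ≤ p2 := Finset.le_sup' w2 hkKF
      have h5 : (k:ℝ) * w2 k ≤ k * p2 := mul_le_mul_of_nonneg_left hle hkR.le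
      have h6 := hw2lt k hk hk2
      linarith
    · rw [hqsD]; exact NSet_mono (Set.Icc_subset_Icc hap (le_refl qs))
  have hlt : ps < qs := by
    rcases lt_or_eq_of_le hpq with h | h
    · exact h
    · exfalso
      exact not_cofinite_point T qs (by linarith) (by rw [← h] at hpsD2 ⊢; rw [h] at hpsD2; exact h ▸ hpsD2) hcof
  refine ⟨ps, qs, ⟨by linarith, hpq, hpsD2, ?_⟩, hap, hlt, hqc⟩
  intro p' q' h1' h2' h3' h4'
  have hne : (Set.Icc p' q').Nonempty := Set.nonempty_Icc.mpr h2'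
  have hsub := (Set.Icc_subset_Icc_iff h2').mp h4'
  have haq' : a ≤ q' := le_trans hap (le_trans hsub.1 h2')
  have hq'D : q' ∈ D := by
    refine ⟨⟨haq', le_trans hsub.2 hqc⟩, ?_⟩
    apply Set.Subset.antisymm
    · rw [h3']
      exact NSet_mono (Set.Icc_subset_Icc (le_trans hap hsub.1) (le_refl q'))
    · rw [hqsD]
      exact NSet_mono (Set.Icc_subset_Icc (le_refl a) hsub.2)
  have hq'ge : qs ≤ q' := csInf_le hDbb hq'D
  have hq'eq : q' = qs := le_antisymm hsub.2 hq'ge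
  have hp'D2 : p' ∈ D2 := by
    refine ⟨⟨le_trans hap hsub.1, le_trans h2' (le_of_eq hq'eq)⟩, ?_⟩
    rw [← hq'eq]; exact h3'
  have hp'le : p' ≤ ps := le_csSup hD2ba hp'D2
  have hp'eq : p' = ps := le_antisymm hp'le hsub.1
  rw [hp'eq, hq'eq]


lemma exists_maxJ (T : Set ℕ) (a c ps qs : ℝ) (ha : 1 < a) (hap : a ≤ ps) (hpq : ps ≤ qs)
    (hqc : qs ≤ c) (hTpq : T = NSet (Set.Icc ps qs)) (hTac : T = NSet (Set.Icc a c))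
    (h1T : (1:ℕ) ∉ T) (hcof : {m : ℕ | m ∉ T}.Finite) :
    ∃ J : Set ℝ, IsMaxOpenInterval T ps qs J ∧ sInf J < a ∧ 1 ≤ sInf J ∧
      (¬ IsHalfLineInterval ps qs → c < sSup J) := by
  classical
  have hps1 : 1 < ps := by linarith
  have hac : a ≤ c := le_trans hap (le_trans hpq hqc)
  set 𝒥 : Set (Set ℝ) := {J' | IsOpenInterval J' ∧ Set.Icc ps qs ⊆ J' ∧ NSet J' = T} with h𝒥
  obtain ⟨ε1, hε1, hε1u, hε1T⟩ := eps_open T ps qs hps1 hpq hTpq hcof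
  obtain ⟨ε2, hε2, hε2u, hε2T⟩ := eps_open T a c ha hac hTac hcof
  have hJ1mem : Set.Ioo (ps - ε1) (qs + ε1) ∈ 𝒥 :=
    ⟨Or.inl ⟨_, _, rfl⟩, Set.Icc_subset_Ioo (by linarith) (by linarith), hε1T.symm⟩
  have hJ2mem : Set.Ioo (a - ε2) (c + ε2) ∈ 𝒥 :=
    ⟨Or.inl ⟨_, _, rfl⟩,
      (Set.Icc_subset_Icc hap hqc).trans (Set.Icc_subset_Ioo (by linarith) (by linarith)),
      hε2T.symm⟩
  set U := ⋃₀ 𝒥 with hU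
  have hordJ : ∀ J' ∈ 𝒥, J'.OrdConnected := by
    intro J' hJ'
    rcases hJ'.1 with ⟨x, y, h⟩ | ⟨x, h⟩
    · rw [h]; exact Set.ordConnected_Ioo
    · rw [h]; exact Set.ordConnected_Ioi
  have hmemIoi : ∀ J' ∈ 𝒥, J' ⊆ Set.Ioi 1 := by
    intro J' hJ' r hr
    by_contra hr1
    rw [Set.mem_Ioi] at hr1
    push_neg at hr1
    have hpsJ' : ps ∈ J' := hJ'.2.1 ⟨le_refl _, hpq⟩
    have h1J : (1:ℝ) ∈ J' := (hordJ J' hJ').out hr hpsJ' ⟨hr1, by linarith⟩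
    have : (1:ℕ) ∈ NSet J' := ⟨1, 1, h1J, by norm_num⟩
    rw [hJ'.2.2] at this
    exact h1T this
  have hUsub : U ⊆ Set.Ioi 1 := by
    rintro r ⟨J', hJ', hrJ'⟩; exact hmemIoi J' hJ' hrJ'
  have hUbb : BddBelow U := ⟨1, fun r hr => le_of_lt (hUsub hr)⟩
  have hUne : ps ∈ U := ⟨_, hJ1mem, Set.Icc_subset_Ioo (by linarith) (by linarith) ⟨le_refl _, hpq⟩⟩
  have hNU : NSet U = T := by
    apply Set.Subset.antisymm
    · rintro m ⟨k, r, hr, he⟩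
      obtain ⟨J', hJ', hrJ'⟩ := hr
      rw [← hJ'.2.2]
      exact ⟨k, r, hrJ', he⟩
    · rw [hε1T]
      exact NSet_mono (Set.subset_sUnion_of_mem hJ1mem)
  have hIccacU : Set.Icc a c ⊆ U :=
    ((Set.Icc_subset_Ioo (by linarith) (by linarith)).trans
      (Set.subset_sUnion_of_mem hJ2mem))
  have hbet : ∀ x ∈ U, ∀ z, (ps ≤ z ∧ z ≤ x) ∨ (x ≤ z ∧ z ≤ ps) → z ∈ U := by
    rintro x ⟨J', hJ', hxJ'⟩ z hz
    have hpsJ' : ps ∈ J' := hJ'.2.1 ⟨le_refl _, hpq⟩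
    rcases hz with ⟨h1, h2⟩ | ⟨h1, h2⟩
    · exact ⟨J', hJ', (hordJ J' hJ').out hpsJ' hxJ' ⟨h1, h2⟩⟩
    · exact ⟨J', hJ', (hordJ J' hJ').out hxJ' hpsJ' ⟨h1, h2⟩⟩
  have hUopen : IsOpen U := by
    apply isOpen_sUnion
    intro J' hJ'
    rcases hJ'.1 with ⟨x, y, h⟩ | ⟨x, h⟩
    · rw [h]; exact isOpen_Ioo
    · rw [h]; exact isOpen_Ioi
  have hstrictlow : ∀ z ∈ U, sInf U < z := by
    intro z hz
    have hle : sInf U ≤ z := csInf_le hUbb hz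
    obtain ⟨δ, hδ, hball⟩ := Metric.isOpen_iff.mp hUopen z hz
    have hz' : z - δ/2 ∈ U := by
      apply hball
      rw [Metric.mem_ball, Real.dist_eq, show z - δ/2 - z = -(δ/2) by ring, abs_neg,
        abs_of_pos (by linarith)]
      linarith
    have := csInf_le hUbb hz'
    linarith
  have hinf1 : 1 ≤ sInf U := le_csInf ⟨ps, hUne⟩ fun r hr => (hUsub hr).le
  have hmax : ∀ J' : Set ℝ, IsOpenInterval J' → Set.Icc ps qs ⊆ J' → NSet J' = T → J' ⊆ U :=
    fun J' h1 h2 h3 => Set.subset_sUnion_of_mem ⟨h1, h2, h3⟩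
  have hamem : a ∈ U := hIccacU ⟨le_refl a, hac⟩
  have hcmem : c ∈ U := hIccacU ⟨hac, le_refl c⟩
  by_cases hbdd : BddAbove U
  · have hstricthigh : ∀ z ∈ U, z < sSup U := by
      intro z hz
      have hle : z ≤ sSup U := le_csSup hbdd hz
      obtain ⟨δ, hδ, hball⟩ := Metric.isOpen_iff.mp hUopen z hz
      have hz' : z + δ/2 ∈ U := by
        apply hball
        rw [Metric.mem_ball, Real.dist_eq, show z + δ/2 - z = δ/2 by ring,
          abs_of_pos (by linarith)]
        linarith
      have := le_csSup hbdd hz'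
      linarith
    have hUeq : U = Set.Ioo (sInf U) (sSup U) := by
      ext z
      constructor
      · intro hz; exact ⟨hstrictlow z hz, hstricthigh z hz⟩
      · rintro ⟨h1, h2⟩
        obtain ⟨x, hxU, hxz⟩ := exists_lt_of_csInf_lt ⟨ps, hUne⟩ h1
        obtain ⟨y, hyU, hzy⟩ := exists_lt_of_lt_csSup ⟨ps, hUne⟩ h2
        rcases le_total z ps with h | h
        · exact hbet x hxU z (Or.inr ⟨hxz.le, h⟩)
        · exact hbet y hyU z (Or.inl ⟨h, hzy.le⟩)
    exact ⟨U, ⟨Or.inl ⟨sInf U, sSup U, hUeq⟩,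
      (Set.Icc_subset_Icc hap hqc).trans hIccacU, hNU, hmax⟩,
      hstrictlow a hamem, hinf1, fun _ => hstricthigh c hcmem⟩
  · have hUeq : U = Set.Ioi (sInf U) := by
      ext z
      constructor
      · intro hz; exact hstrictlow z hz
      · intro h1
        obtain ⟨x, hxU, hxz⟩ := exists_lt_of_csInf_lt ⟨ps, hUne⟩ h1
        obtain ⟨y, hyU, hzy⟩ := not_bddAbove_iff.mp hbdd z
        rcases le_total z ps with h | h
        · exact hbet x hxU z (Or.inr ⟨hxz.le, h⟩)
        · exact hbet y hyU z (Or.inl ⟨h, hzy.le⟩)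
    have hhalf : IsHalfLineInterval ps qs := by
      refine ⟨hps1, fun q' hq' => ?_⟩
      apply Set.Subset.antisymm
      · have hsub : Set.Icc ps q' ⊆ U := by
          intro r hr
          rw [hUeq, Set.mem_Ioi]
          exact lt_of_lt_of_le (hstrictlow ps hUne) hr.1
        calc NSet (Set.Icc ps q') ⊆ NSet U := NSet_mono hsub
          _ = NSet (Set.Icc ps qs) := by rw [hNU, ← hTpq]
      · exact NSet_mono (Set.Icc_subset_Icc (le_refl ps) hq')
    exact ⟨U, ⟨Or.inr ⟨sInf U, hUeq⟩,
      (Set.Icc_subset_Icc hap hqc).trans hIccacU, hNU, hmax⟩,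
      hstrictlow a hamem, hinf1, fun hnh => absurd hhalf hnh⟩


lemma sum_single_div' (u : Fin n → ℝ) (i : Fin n) (t : ℝ) :
    ∑ j, (Pi.single i t : Fin n → ℝ) j / u j = t / u i := by
  rw [Finset.sum_eq_single i]
  · rw [Pi.single_eq_same]
  · intro j _ hj
    rw [Pi.single_eq_of_ne hj]
    simp
  · intro h; exact absurd (Finset.mem_univ i) h

lemma convex_sumdiv_le (w : Fin n → ℝ) (r : ℝ) :
    Convex ℝ {y : Fin n → ℝ | ∑ i, y i / w i ≤ r} := by
  intro y hy z hz a b ha hb hab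
  simp only [Set.mem_setOf_eq] at hy hz ⊢
  have : ∑ i, (a • y + b • z) i / w i
      = a * ∑ i, y i / w i + b * ∑ i, z i / w i := by
    rw [Finset.mul_sum, Finset.mul_sum, ← Finset.sum_add_distrib]
    apply Finset.sum_congr rfl
    intro i _
    simp only [Pi.add_apply, Pi.smul_apply, smul_eq_mul]
    ring
  rw [this]
  have hr' : a * r + b * r = r := by rw [← add_mul, hab, one_mul]
  linarith [mul_le_mul_of_nonneg_left hy ha, mul_le_mul_of_nonneg_left hz hb]

lemma convex_sumdiv_ge (w : Fin n → ℝ) (r : ℝ) :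
    Convex ℝ {y : Fin n → ℝ | r ≤ ∑ i, y i / w i} := by
  intro y hy z hz a b ha hb hab
  simp only [Set.mem_setOf_eq] at hy hz ⊢
  have : ∑ i, (a • y + b • z) i / w i
      = a * ∑ i, y i / w i + b * ∑ i, z i / w i := by
    rw [Finset.mul_sum, Finset.mul_sum, ← Finset.sum_add_distrib]
    apply Finset.sum_congr rfl
    intro i _
    simp only [Pi.add_apply, Pi.smul_apply, smul_eq_mul]
    ring
  rw [this]
  have hr' : a * r + b * r = r := by rw [← add_mul, hab, one_mul]
  linarith [mul_le_mul_of_nonneg_left hy ha, mul_le_mul_of_nonneg_left hz hb]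

lemma maxJ_subset_Ioi1 (T : Set ℕ) (ps qs : ℝ) (J : Set ℝ) (hps : 1 < ps) (hpq : ps ≤ qs)
    (hmax : IsMaxOpenInterval T ps qs J) (h1T : (1:ℕ) ∉ T) : J ⊆ Set.Ioi 1 := by
  intro r hr
  by_contra hr1
  rw [Set.mem_Ioi] at hr1
  push_neg at hr1
  have hord : J.OrdConnected := by
    rcases hmax.1 with ⟨x, y, h⟩ | ⟨x, h⟩
    · rw [h]; exact Set.ordConnected_Ioo
    · rw [h]; exact Set.ordConnected_Ioi
  have hpsJ : ps ∈ J := hmax.2.1 ⟨le_refl _, hpq⟩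
  have h1J : (1:ℝ) ∈ J := hord.out hr hpsJ ⟨hr1, by linarith⟩
  have : (1:ℕ) ∈ NSet J := ⟨1, 1, h1J, by norm_num⟩
  rw [hmax.2.2.1] at this
  exact h1T this

lemma rat_scale (x : ℚ) (hx : 0 < x) (N : ℕ) (hdvd : x.num.toNat ∣ N) :
    ((x.den * (N / x.num.toNat) : ℕ) : ℚ) * x = N := by
  have hnum : (0:ℤ) < x.num := Rat.num_pos.mpr hx
  have hnumT : (0:ℕ) < x.num.toNat := by
    rw [Int.lt_toNat]; exact hnum
  have h1 : ((N / x.num.toNat) * x.num.toNat : ℕ) = N := Nat.div_mul_cancel hdvd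
  have h2 : ((x.num.toNat : ℕ) : ℚ) = ((x.num : ℤ) : ℚ) := by
    exact_mod_cast congrArg (fun z : ℤ => (z : ℚ)) (Int.toNat_of_nonneg hnum.le)
  have hden : ((x.den : ℕ) : ℚ) ≠ 0 := Nat.cast_ne_zero.mpr x.den_nz
  calc ((x.den * (N / x.num.toNat) : ℕ) : ℚ) * x
      = ((x.den : ℕ) : ℚ) * ((N / x.num.toNat : ℕ) : ℚ) * x := by push_cast; ring
    _ = ((N / x.num.toNat : ℕ) : ℚ) * (((x.num : ℤ) : ℚ) / ((x.den : ℕ) : ℚ))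
        * ((x.den : ℕ) : ℚ) := by rw [Rat.num_div_den x]; ring
    _ = ((N / x.num.toNat : ℕ) : ℚ) * ((x.num : ℤ) : ℚ) := by
        field_simp
    _ = ((N / x.num.toNat : ℕ) : ℚ) * ((x.num.toNat : ℕ) : ℚ) := by rw [h2]
    _ = (((N / x.num.toNat) * x.num.toNat : ℕ) : ℚ) := by push_cast; ring
    _ = N := by rw [h1]


lemma sum_div_le_sum_div {n : ℕ} (u v : Fin n → ℝ) (hu : ∀ i, 0 < u i)
    (huv : ∀ i, u i ≤ v i) (x : Fin n → ℕ) :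
    ∑ i, (x i : ℝ) / v i ≤ ∑ i, (x i : ℝ) / u i := by
  apply Finset.sum_le_sum
  intro i _
  rw [div_eq_mul_one_div ((x i : ℝ)) (v i), div_eq_mul_one_div ((x i : ℝ)) (u i)]
  exact mul_le_mul_of_nonneg_left (one_div_le_one_div_of_le (hu i) (huv i)) (Nat.cast_nonneg _)

theorem forward_dir (n : ℕ) (S : Set (Fin n → ℕ)) (h0 : (0 : Fin n → ℕ) ∈ S)
    (hfin : Sᶜ.Finite) (he : ∀ i, Pi.single i 1 ∉ S)
    (f g : Fin n → ℤ) (b : ℤ) (hb : 0 < b)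
    (hS : S = {x : Fin n → ℕ | (∑ i, f i * (x i : ℤ)) % b ≤ ∑ i, g i * (x i : ℤ)}) :
    (∃ (pt qt : Fin n → ℝ) (J : Fin n → Set ℝ),
      (∀ i, IsMinimalInterval (Si S i) (pt i) (qt i)) ∧
      (∀ i, IsMaxOpenInterval (Si S i) (pt i) (qt i) (J i)) ∧
      (∀ x : Fin n → ℕ, x ∉ S → ∃ k : ℕ, 1 ≤ k ∧ k ≤ phiN pt qt ∧ x ∈ Hset pt qt k) ∧
      ∃ p q : Fin n → ℚ,
        (∀ i, (IsHalfLineInterval (pt i) (qt i) →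
            sInf (J i) < (p i : ℝ) ∧ (p i : ℝ) ≤ pt i ∧ pt i < qt i ∧ qt i ≤ (q i : ℝ)) ∧
          (¬ IsHalfLineInterval (pt i) (qt i) →
            sInf (J i) < (p i : ℝ) ∧ (p i : ℝ) ≤ pt i ∧ pt i < qt i ∧ qt i ≤ (q i : ℝ) ∧
            (q i : ℝ) < sSup (J i))) ∧
        (∀ x ∈ VSet (castV '' (Sᶜ ∩ Hset pt qt 1)),
          0 < hL (fun i => (p i : ℝ)) 1 x) ∧
        (∀ k : ℕ, 2 ≤ k → k ≤ phiN pt qt →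
          ∀ x ∈ VSet (castV '' (Sᶜ ∩ Hset pt qt k)),
            0 < hL (fun i => (p i : ℝ)) (k : ℝ) x ∧
            hL (fun i => (q i : ℝ)) ((k : ℝ) - 1) x < 0) ∧
        (∀ s ∈ MinGenM S, (¬ ∃ k : ℕ, castV s ∈ (k : ℝ) • PL pt qt) →
          kappa (∑ j, (s j : ℝ) / sInf (J j)) ≠ 0 ∧
          ∃ m : ℕ, 1 ≤ m ∧ (m : ℤ) ≤ kappa (∑ j, (s j : ℝ) / sInf (J j)) ∧
            hL (fun i => (p i : ℝ)) 1 (fun i => (s i : ℝ) / (m : ℝ)) ≤ 0 ∧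
            0 ≤ hL (fun i => (q i : ℝ)) 1 (fun i => (s i : ℝ) / (m : ℝ)))) := by
  classical
  have hbR : (0:ℝ) < b := by exact_mod_cast hb
  -- normalize f
  set f' : Fin n → ℤ := fun i => (f i - 1) % b + 1 with hf'def
  have hf'1 : ∀ i, 1 ≤ f' i := by
    intro i
    have h := Int.emod_nonneg (f i - 1) hb.ne'
    simp only [hf'def]
    linarith
  have hf'b : ∀ i, f' i ≤ b := by
    intro i
    have h := Int.emod_lt_of_pos (f i - 1) hb
    simp only [hf'def]
    linarith
  have hf'mod : ∀ i, f' i = f i - b * ((f i - 1) / b) := by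
    intro i
    have h := Int.emod_add_mul_ediv (f i - 1) b
    simp only [hf'def]
    linarith
  have hSf' : S = {x : Fin n → ℕ | (∑ i, f' i * (x i : ℤ)) % b ≤ ∑ i, g i * (x i : ℤ)} := by
    rw [hS]
    ext x
    simp only [Set.mem_setOf_eq]
    have hsum : ∑ i, f' i * (x i:ℤ)
        = (∑ i, f i * (x i:ℤ)) + b * ∑ i, (-((f i - 1) / b)) * (x i:ℤ) := by
      rw [Finset.mul_sum, ← Finset.sum_add_distrib]
      apply Finset.sum_congr rfl
      intro i _
      rw [hf'mod i]; ring
    rw [hsum, Int.add_mul_emod_self_left]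
  have hchar : ∀ x : Fin n → ℕ, x ∈ S ↔
      ∃ k : ℕ, (∑ i, (f' i - g i) * (x i:ℤ)) ≤ (k:ℤ) * b ∧ (k:ℤ) * b ≤ ∑ i, f' i * (x i:ℤ) := by
    intro x
    rw [hSf']
    simp only [Set.mem_setOf_eq]
    have hGdef : ∑ i, (f' i - (f' i - g i)) * (x i:ℤ) = ∑ i, g i * (x i:ℤ) :=
      Finset.sum_congr rfl fun i _ => by ring
    rw [← hGdef]
    exact mod_char f' (fun i => f' i - g i) b hb (fun i => by linarith [hf'1 i]) x
  -- coordinate facts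
  have hSichar : ∀ (i : Fin n) (t : ℕ), (t ∈ Si S i) ↔
      ∃ k : ℕ, (f' i - g i) * t ≤ (k:ℤ)*b ∧ (k:ℤ)*b ≤ f' i * t := by
    intro i t
    have h1 : (t ∈ Si S i) ↔ Pi.single i t ∈ S := Iff.rfl
    rw [h1, hchar (Pi.single i t)]
    constructor
    · rintro ⟨k, hk1, hk2⟩
      rw [sum_single_int] at hk1 hk2
      exact ⟨k, hk1, hk2⟩
    · rintro ⟨k, hk1, hk2⟩
      refine ⟨k, ?_, ?_⟩ <;> rw [sum_single_int] <;> assumption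
  have hcofSi : ∀ i, {m : ℕ | m ∉ Si S i}.Finite := by
    intro i
    have heq : {m : ℕ | m ∉ Si S i} = (fun t : ℕ => Pi.single i t) ⁻¹' Sᶜ := by
      ext t; simp [Si]
    rw [heq]
    apply Set.Finite.preimage _ hfin
    intro s _ t _ hst
    have := congrFun hst i
    simpa using this
  have hgnn : ∀ i, 0 ≤ g i := by
    intro i
    obtain ⟨M, hM⟩ := (hcofSi i).bddAbove
    have htS : (M+1 : ℕ) ∈ Si S i := by
      by_contra h
      have := hM h
      simp at this
    obtain ⟨k, h1, h2⟩ := (hSichar i (M+1)).mp htS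
    have hM1 : (0:ℤ) < ((M+1 : ℕ):ℤ) := by positivity
    nlinarith
  have hfg1 : ∀ i, 1 ≤ f' i - g i := by
    intro i
    by_contra h
    push_neg at h
    apply he i
    show (1:ℕ) ∈ Si S i
    refine (hSichar i 1).mpr ⟨0, ?_, ?_⟩
    · push_cast; linarith
    · push_cast; linarith [hf'1 i]
  have hf'lt : ∀ i, f' i < b := by
    intro i
    rcases lt_or_eq_of_le (hf'b i) with h | h
    · exact h
    · exfalso
      apply he i
      show (1:ℕ) ∈ Si S i
      refine (hSichar i 1).mpr ⟨1, ?_, ?_⟩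
      · push_cast; linarith [hgnn i]
      · push_cast; linarith
  -- intervals data
  set aR : Fin n → ℝ := fun i => (b:ℝ)/((f' i : ℤ):ℝ) with haRdef
  set cR : Fin n → ℝ := fun i => (b:ℝ)/(((f' i - g i : ℤ)):ℝ) with hcRdef
  have hf'posR : ∀ i, (0:ℝ) < ((f' i : ℤ):ℝ) := fun i => by exact_mod_cast (by linarith [hf'1 i] : (0:ℤ) < f' i)
  have hfgposR : ∀ i, (0:ℝ) < (((f' i - g i : ℤ)):ℝ) := fun i => by exact_mod_cast (by linarith [hfg1 i] : (0:ℤ) < f' i - g i)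
  have haR1 : ∀ i, 1 < aR i := by
    intro i
    rw [haRdef]
    rw [lt_div_iff₀ (hf'posR i), one_mul]
    exact_mod_cast hf'lt i
  have haRc : ∀ i, aR i ≤ cR i := by
    intro i
    rw [haRdef, hcRdef, div_le_div_iff₀ (hf'posR i) (hfgposR i)]
    have h1 : ((f' i - g i : ℤ):ℝ) ≤ ((f' i : ℤ):ℝ) := by
      exact_mod_cast (by linarith [hgnn i] : f' i - g i ≤ f' i)
    nlinarith
  have haRpos : ∀ i, (0:ℝ) < aR i := fun i => by linarith [haR1 i]
  have hcRpos : ∀ i, (0:ℝ) < cR i := fun i => lt_of_lt_of_le (haRpos i) (haRc i)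
  have hbridgeA : ∀ x : Fin n → ℕ,
      ∑ i, (x i:ℝ)/aR i = ((∑ i, f' i * (x i:ℤ) : ℤ):ℝ)/(b:ℝ) := by
    intro x
    rw [haRdef]
    exact sum_div_bridge f' b hb (fun i => by linarith [hf'1 i]) x
  have hbridgeC : ∀ x : Fin n → ℕ,
      ∑ i, (x i:ℝ)/cR i = ((∑ i, (f' i - g i) * (x i:ℤ) : ℤ):ℝ)/(b:ℝ) := by
    intro x
    rw [hcRdef]
    exact sum_div_bridge (fun i => f' i - g i) b hb
      (fun i => by show (0:ℤ) < f' i - g i; linarith [hfg1 i]) x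
  have hcharR : ∀ x : Fin n → ℕ, x ∈ S ↔
      ∃ k : ℕ, (∑ i, (x i:ℝ)/cR i) ≤ k ∧ (k:ℝ) ≤ ∑ i, (x i:ℝ)/aR i := by
    intro x
    rw [hchar x]
    constructor
    · rintro ⟨k, h1, h2⟩
      refine ⟨k, ?_, ?_⟩
      · rw [hbridgeC, div_le_iff₀ hbR]
        exact_mod_cast h1
      · rw [hbridgeA, le_div_iff₀ hbR]
        exact_mod_cast h2
    · rintro ⟨k, h1, h2⟩
      rw [hbridgeC, div_le_iff₀ hbR] at h1
      rw [hbridgeA, le_div_iff₀ hbR] at h2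
      exact ⟨k, by exact_mod_cast h1, by exact_mod_cast h2⟩
  have hSiN : ∀ i, Si S i = NSet (Set.Icc (aR i) (cR i)) := by
    intro i
    ext t
    rw [mem_NSet_Icc (haRpos i) (haRc i)]
    have h1 : (t ∈ Si S i) ↔ Pi.single i t ∈ S := Iff.rfl
    rw [h1, hcharR (Pi.single i t)]
    constructor
    · rintro ⟨k, hk1, hk2⟩
      rw [sum_single_div] at hk1 hk2
      refine ⟨k, ?_, ?_⟩
      · rw [← le_div_iff₀ (haRpos i)]
        linarith [mul_comm (k:ℝ) (aR i)]
      · rw [← div_le_iff₀ (hcRpos i)] at *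
        linarith
    · rintro ⟨k, hk1, hk2⟩
      refine ⟨k, ?_, ?_⟩ <;> rw [sum_single_div]
      · rw [div_le_iff₀ (hcRpos i)]
        linarith [mul_comm (k:ℝ) (cR i)]
      · rw [le_div_iff₀ (haRpos i)]
        linarith [mul_comm (k:ℝ) (aR i)]
  -- minimal intervals and maximal open intervals
  have H : ∀ i, ∃ pt qt : ℝ, ∃ J : Set ℝ,
      IsMinimalInterval (Si S i) pt qt ∧ IsMaxOpenInterval (Si S i) pt qt J ∧
      aR i ≤ pt ∧ pt < qt ∧ qt ≤ cR i ∧ sInf J < aR i ∧ 1 ≤ sInf J ∧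
      (¬ IsHalfLineInterval pt qt → cR i < sSup J) := by
    intro i
    have h1Si : (1:ℕ) ∉ Si S i := he i
    obtain ⟨pt, qt, hmin, h1, h2, h3⟩ :=
      exists_minimal_interval (Si S i) (aR i) (cR i) (haR1 i) (haRc i) (hSiN i) (hcofSi i)
    obtain ⟨J, hmax, hJ1, hJ2, hJ3⟩ :=
      exists_maxJ (Si S i) (aR i) (cR i) pt qt (haR1 i) h1 (le_of_lt h2) h3
        hmin.2.2.1 (hSiN i) h1Si (hcofSi i)
    exact ⟨pt, qt, J, hmin, hmax, h1, h2, h3, hJ1, hJ2, hJ3⟩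
  choose pt qt J hmin hmax hapt hptqt hqtc hJinfa hJinf1 hJsup using H
  have hptpos : ∀ i, (0:ℝ) < pt i := fun i => lt_of_lt_of_le (haRpos i) (hapt i)
  have hqtpos : ∀ i, (0:ℝ) < qt i := fun i => lt_trans (hptpos i) (hptqt i)
  -- no intermediate integer for gaps
  have hnomid : ∀ x : Fin n → ℕ, x ∉ S → ∀ k : ℕ,
      (∑ i, (x i:ℝ)/cR i) ≤ k → ¬((k:ℝ) ≤ ∑ i, (x i:ℝ)/aR i) := by
    intro x hx k h1 h2
    exact hx ((hcharR x).mpr ⟨k, h1, h2⟩)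
  have hsumAa : ∀ x : Fin n → ℕ, ∑ i, (x i:ℝ)/pt i ≤ ∑ i, (x i:ℝ)/aR i :=
    fun x => sum_div_le_sum_div aR pt haRpos hapt x
  have hsumCq : ∀ x : Fin n → ℕ, ∑ i, (x i:ℝ)/cR i ≤ ∑ i, (x i:ℝ)/qt i :=
    fun x => sum_div_le_sum_div qt cR hqtpos hqtc x
  have hsumQp : ∀ x : Fin n → ℕ, ∑ i, (x i:ℝ)/qt i ≤ ∑ i, (x i:ℝ)/pt i :=
    fun x => sum_div_le_sum_div pt qt hptpos (fun i => (hptqt i).le) x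
  -- coverage
  have hcover : ∀ x : Fin n → ℕ, x ∉ S →
      ∃ k : ℕ, 1 ≤ k ∧ k ≤ phiN pt qt ∧ x ∈ Hset pt qt k := by
    intro x hx
    have hx0 : x ≠ 0 := fun h => hx (h ▸ h0)
    set A' := ∑ i, (x i:ℝ)/pt i with hA'
    set C' := ∑ i, (x i:ℝ)/qt i with hC'
    have hA'0 : 0 ≤ A' := Finset.sum_nonneg fun i _ =>
      div_nonneg (Nat.cast_nonneg _) (hptpos i).le
    set k' : ℕ := ⌊A'⌋.toNat + 1 with hk'
    have hfl : ((⌊A'⌋.toNat : ℕ) : ℤ) = ⌊A'⌋ := Int.toNat_of_nonneg (Int.floor_nonneg.mpr hA'0)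
    have hflR : ((⌊A'⌋.toNat : ℕ) : ℝ) = ((⌊A'⌋ : ℤ) : ℝ) := by exact_mod_cast hfl
    have hk'cast : ((k' : ℕ):ℝ) = ((⌊A'⌋ : ℤ):ℝ) + 1 := by
      rw [hk']; push_cast [hflR]; push_cast; ring
    have hk'A : A' < k' := by
      rw [hk'cast]; exact Int.lt_floor_add_one A'
    have hflA : ((⌊A'⌋ : ℤ):ℝ) ≤ A' := Int.floor_le A'
    have hCk' : (k':ℝ) - 1 < C' := by
      by_contra hcon
      push_neg at hcon
      refine hnomid x hx ⌊A'⌋.toNat ?_ ?_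
      · rw [hflR]
        calc ∑ i, (x i:ℝ)/cR i ≤ C' := hsumCq x
          _ ≤ (k':ℝ) - 1 := hcon
          _ = ((⌊A'⌋ : ℤ):ℝ) := by rw [hk'cast]; ring
      · rw [hflR]
        exact le_trans hflA (hsumAa x)
    have hk'phi : k' ≤ phiN pt qt := by
      by_contra hgt
      push_neg at hgt
      have hphile : phiN pt qt ≤ k' - 1 := by omega
      simp only [phiN] at hphile
      have hki : ∀ i, (k':ℝ) * pt i ≤ ((k':ℝ) - 1) * qt i := by
        intro i
        have h1 : (⌈pt i / (qt i - pt i)⌉).toNat ≤ k' - 1 :=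
          le_trans (Finset.le_sup (f := fun i => (⌈pt i / (qt i - pt i)⌉).toNat)
            (Finset.mem_univ i)) hphile
        have h2 : ⌈pt i / (qt i - pt i)⌉ ≤ ((k' - 1 : ℕ) : ℤ) := Int.toNat_le.mp h1
        have h3 : pt i / (qt i - pt i) ≤ ((k' - 1 : ℕ):ℝ) := by
          refine le_trans (Int.le_ceil _) ?_
          exact_mod_cast h2
        have h4 : (0:ℝ) < qt i - pt i := by linarith [hptqt i]
        rw [div_le_iff₀ h4] at h3
        have hcast : ((k' - 1 : ℕ):ℝ) = (k':ℝ) - 1 := by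
          have h5 : 1 ≤ k' := by omega
          push_cast [Nat.cast_sub h5]
          ring
        rw [hcast] at h3
        nlinarith
      by_cases hk1 : k' = 1
      · obtain ⟨j, hj⟩ := Function.ne_iff.mp hx0
        have hkij := hki j
        rw [hk1] at hkij
        push_cast at hkij
        have := hptpos j
        have := hqtpos j
        linarith
      · have hk2 : 2 ≤ k' := by omega
        have hk2R : (2:ℝ) ≤ (k':ℝ) := by exact_mod_cast hk2
        have hk'pos : (0:ℝ) < (k':ℝ) := by linarith
        have hfrac : (0:ℝ) < ((k':ℝ) - 1)/(k':ℝ) := by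
          apply div_pos <;> linarith
        have hCC : C' ≤ ((k':ℝ) - 1)/(k':ℝ) * A' := by
          rw [hC', hA', Finset.mul_sum]
          apply Finset.sum_le_sum
          intro i _
          rw [div_mul_div_comm]
          have hposm : (0:ℝ) < (k':ℝ) * pt i := mul_pos hk'pos (hptpos i)
          rw [div_le_div_iff₀ (hqtpos i) hposm]
          nlinarith [hki i, (Nat.cast_nonneg (x i) : (0:ℝ) ≤ (x i : ℝ)), hqtpos i, hptpos i]
        have hlast : C' < (k':ℝ) - 1 := by
          calc C' ≤ ((k':ℝ) - 1)/(k':ℝ) * A' := hCC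
            _ < ((k':ℝ) - 1)/(k':ℝ) * k' := by exact mul_lt_mul_of_pos_left hk'A hfrac
            _ = (k':ℝ) - 1 := by field_simp
        linarith
    refine ⟨k', by omega, hk'phi, ?_⟩
    have hsum_p : ∑ i, castV x i / pt i = A' := by simp only [castV, hA']
    have hsum_q : ∑ i, castV x i / qt i = C' := by simp only [castV, hC']
    by_cases hk1 : k' = 1
    · simp only [Hset, Set.mem_setOf_eq, if_pos hk1]
      rw [hL_pos_iff hptpos, hsum_p]
      rw [hk1] at hk'A
      simpa using hk'A
    · simp only [Hset, Set.mem_setOf_eq, if_neg hk1]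
      constructor
      · rw [hL_pos_iff hptpos, hsum_p]; exact hk'A
      · rw [hL_neg_iff hqtpos, hsum_q]; exact hCk'
  -- rationals
  set pQ : Fin n → ℚ := fun i => (b:ℚ)/((f' i : ℤ):ℚ) with hpQ
  set qQ : Fin n → ℚ := fun i => (b:ℚ)/(((f' i - g i : ℤ)):ℚ) with hqQ
  have hpQaR : ∀ i, ((pQ i : ℚ):ℝ) = aR i := by
    intro i
    simp only [hpQ, haRdef]
    push_cast
    ring
  have hqQcR : ∀ i, ((qQ i : ℚ):ℝ) = cR i := by
    intro i
    simp only [hqQ, hcRdef]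
    push_cast
    ring
  have hfunp : (fun i => ((pQ i : ℚ):ℝ)) = aR := funext hpQaR
  have hfunq : (fun i => ((qQ i : ℚ):ℝ)) = cR := funext hqQcR
  refine ⟨pt, qt, J, hmin, hmax, hcover, pQ, qQ, ?_, ?_, ?_, ?_⟩
  · -- condition (1)
    intro i
    constructor
    · intro _
      exact ⟨by rw [hpQaR i]; exact hJinfa i, by rw [hpQaR i]; exact hapt i, hptqt i,
        by rw [hqQcR i]; exact hqtc i⟩
    · intro hnh
      exact ⟨by rw [hpQaR i]; exact hJinfa i, by rw [hpQaR i]; exact hapt i, hptqt i,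
        by rw [hqQcR i]; exact hqtc i, by rw [hqQcR i]; exact hJsup i hnh⟩
  · -- condition (2), k = 1
    intro x hx
    obtain ⟨x₀, ⟨hx₀S, hx₀H⟩, rfl⟩ := extremePoints_convexHull_subset hx
    rw [hfunp, hL_pos_iff haRpos]
    have hH : 0 < hL pt 1 (castV x₀) := by simpa [Hset] using hx₀H
    rw [hL_pos_iff hptpos] at hH
    simp only [castV] at hH ⊢
    by_contra hcon
    push_neg at hcon
    refine hnomid x₀ hx₀S 1 ?_ ?_
    · push_cast
      calc ∑ i, (x₀ i:ℝ)/cR i ≤ ∑ i, (x₀ i:ℝ)/qt i := hsumCq x₀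
        _ ≤ ∑ i, (x₀ i:ℝ)/pt i := hsumQp x₀
        _ ≤ 1 := hH.le
    · push_cast
      exact hcon
  · -- condition (2), k ≥ 2
    intro k hk2 _ x hx
    obtain ⟨x₀, ⟨hx₀S, hx₀H⟩, rfl⟩ := extremePoints_convexHull_subset hx
    have hk1 : k ≠ 1 := by omega
    have hH : (0 < hL pt (k:ℝ) (castV x₀)) ∧ hL qt ((k:ℝ)-1) (castV x₀) < 0 := by
      simpa [Hset, hk1] using hx₀H
    obtain ⟨hH1, hH2⟩ := hH
    rw [hL_pos_iff hptpos] at hH1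
    rw [hL_neg_iff hqtpos] at hH2
    simp only [castV] at hH1 hH2
    have hcast : ((k-1:ℕ):ℝ) = (k:ℝ) - 1 := by
      have h5 : 1 ≤ k := by omega
      push_cast [Nat.cast_sub h5]
      ring
    constructor
    · rw [hfunp, hL_pos_iff haRpos]
      simp only [castV]
      by_contra hcon
      push_neg at hcon
      refine hnomid x₀ hx₀S k ?_ hcon
      calc ∑ i, (x₀ i:ℝ)/cR i ≤ ∑ i, (x₀ i:ℝ)/qt i := hsumCq x₀
        _ ≤ ∑ i, (x₀ i:ℝ)/pt i := hsumQp x₀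
        _ ≤ k := hH1.le
    · rw [hfunq, hL_neg_iff hcRpos]
      simp only [castV]
      by_contra hcon
      push_neg at hcon
      refine hnomid x₀ hx₀S (k-1) ?_ ?_
      · rw [hcast]; exact hcon
      · rw [hcast]
        calc (k:ℝ)-1 ≤ ∑ i, (x₀ i:ℝ)/qt i := hH2.le
          _ ≤ ∑ i, (x₀ i:ℝ)/pt i := hsumQp x₀
          _ ≤ ∑ i, (x₀ i:ℝ)/aR i := hsumAa x₀
  · -- condition (3)
    intro s hs _
    have hsS : s ∈ S := hs.1
    have hs0 : s ≠ 0 := hs.2.1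
    obtain ⟨m₀, hm₀1, hm₀2⟩ := (hcharR s).mp hsS
    have hm₀pos : 1 ≤ m₀ := by
      by_contra h
      push_neg at h
      have hm0 : m₀ = 0 := by omega
      rw [hm0] at hm₀1
      push_cast at hm₀1
      have hnn : ∀ i ∈ Finset.univ, (0:ℝ) ≤ (s i:ℝ)/cR i := fun i _ =>
        div_nonneg (Nat.cast_nonneg _) (hcRpos i).le
      have hsum0 : ∑ i, (s i:ℝ)/cR i = 0 := le_antisymm hm₀1 (Finset.sum_nonneg hnn)
      apply hs0
      funext i
      have hz := (Finset.sum_eq_zero_iff_of_nonneg hnn).mp hsum0 i (Finset.mem_univ i)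
      rw [div_eq_zero_iff] at hz
      rcases hz with h' | h'
      · exact_mod_cast h'
      · exact absurd h' (ne_of_gt (hcRpos i))
    have hm₀R : (0:ℝ) < m₀ := by
      have : (1:ℝ) ≤ m₀ := by exact_mod_cast hm₀pos
      linarith
    obtain ⟨j, hj⟩ := Function.ne_iff.mp hs0
    have hJpos : ∀ i, (0:ℝ) < sInf (J i) := fun i => by linarith [hJinf1 i]
    have hrgt : ∑ i, (s i:ℝ)/aR i < ∑ i, (s i:ℝ)/sInf (J i) := by
      apply Finset.sum_lt_sum
      · intro i _
        rw [div_eq_mul_one_div, div_eq_mul_one_div ((s i:ℝ))]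
        exact mul_le_mul_of_nonneg_left
          (one_div_le_one_div_of_le (hJpos i) (hJinfa i).le) (Nat.cast_nonneg _)
      · refine ⟨j, Finset.mem_univ j, ?_⟩
        have hsj : (0:ℝ) < (s j:ℝ) := by
          have : 0 < s j := Nat.pos_of_ne_zero (by simpa using hj)
          exact_mod_cast this
        rw [div_lt_div_iff₀ (haRpos j) (hJpos j)]
        nlinarith [hJinfa j]
    set r := ∑ i, (s i:ℝ)/sInf (J i) with hrdef
    have hrm : (m₀:ℝ) < r := lt_of_le_of_lt hm₀2 hrgt
    have hr1 : 1 < r := by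
      have : (1:ℝ) ≤ m₀ := by exact_mod_cast hm₀pos
      linarith
    have hkap : kappa r = ⌈r⌉ - 1 := if_neg (by linarith)
    have hceil : (m₀:ℤ) < ⌈r⌉ := by
      rw [Int.lt_ceil]
      exact_mod_cast hrm
    have hm₀Z : (1:ℤ) ≤ (m₀:ℤ) := by exact_mod_cast hm₀pos
    refine ⟨?_, m₀, hm₀pos, ?_, ?_, ?_⟩
    · rw [hkap]
      omega
    · rw [hkap]
      omega
    · rw [hfunp, hL_nonpos_iff haRpos]
      have hsum : ∑ i, ((s i:ℝ)/(m₀:ℝ))/aR i = (∑ i, (s i:ℝ)/aR i)/(m₀:ℝ) := by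
        rw [Finset.sum_div]
        exact Finset.sum_congr rfl fun i _ => by ring
      rw [hsum, le_div_iff₀ hm₀R, one_mul]
      exact hm₀2
    · rw [hfunq, hL_nonneg_iff hcRpos]
      have hsum : ∑ i, ((s i:ℝ)/(m₀:ℝ))/cR i = (∑ i, (s i:ℝ)/cR i)/(m₀:ℝ) := by
        rw [Finset.sum_div]
        exact Finset.sum_congr rfl fun i _ => by ring
      rw [hsum, div_le_iff₀ hm₀R, one_mul]
      exact hm₀1


theorem backward_dir (n : ℕ) (S : Set (Fin n → ℕ)) (h0 : (0 : Fin n → ℕ) ∈ S)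
    (hfin : Sᶜ.Finite) (he : ∀ i, Pi.single i 1 ∉ S)
    (hR : ∃ (pt qt : Fin n → ℝ) (J : Fin n → Set ℝ),
      (∀ i, IsMinimalInterval (Si S i) (pt i) (qt i)) ∧
      (∀ i, IsMaxOpenInterval (Si S i) (pt i) (qt i) (J i)) ∧
      (∀ x : Fin n → ℕ, x ∉ S → ∃ k : ℕ, 1 ≤ k ∧ k ≤ phiN pt qt ∧ x ∈ Hset pt qt k) ∧
      ∃ p q : Fin n → ℚ,
        (∀ i, (IsHalfLineInterval (pt i) (qt i) →
            sInf (J i) < (p i : ℝ) ∧ (p i : ℝ) ≤ pt i ∧ pt i < qt i ∧ qt i ≤ (q i : ℝ)) ∧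
          (¬ IsHalfLineInterval (pt i) (qt i) →
            sInf (J i) < (p i : ℝ) ∧ (p i : ℝ) ≤ pt i ∧ pt i < qt i ∧ qt i ≤ (q i : ℝ) ∧
            (q i : ℝ) < sSup (J i))) ∧
        (∀ x ∈ VSet (castV '' (Sᶜ ∩ Hset pt qt 1)),
          0 < hL (fun i => (p i : ℝ)) 1 x) ∧
        (∀ k : ℕ, 2 ≤ k → k ≤ phiN pt qt →
          ∀ x ∈ VSet (castV '' (Sᶜ ∩ Hset pt qt k)),
            0 < hL (fun i => (p i : ℝ)) (k : ℝ) x ∧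
            hL (fun i => (q i : ℝ)) ((k : ℝ) - 1) x < 0) ∧
        (∀ s ∈ MinGenM S, (¬ ∃ k : ℕ, castV s ∈ (k : ℝ) • PL pt qt) →
          kappa (∑ j, (s j : ℝ) / sInf (J j)) ≠ 0 ∧
          ∃ m : ℕ, 1 ≤ m ∧ (m : ℤ) ≤ kappa (∑ j, (s j : ℝ) / sInf (J j)) ∧
            hL (fun i => (p i : ℝ)) 1 (fun i => (s i : ℝ) / (m : ℝ)) ≤ 0 ∧
            0 ≤ hL (fun i => (q i : ℝ)) 1 (fun i => (s i : ℝ) / (m : ℝ)))) :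
    ∃ (f g : Fin n → ℤ) (b : ℤ), 0 < b ∧
      S = {x : Fin n → ℕ | (∑ i, f i * (x i : ℤ)) % b ≤ ∑ i, g i * (x i : ℤ)} := by
  classical
  obtain ⟨pt, qt, J, hmin, hmax, hcov, p, q, h1, h2a, h2b, h3⟩ := hR
  have hpt1 : ∀ i, 1 < pt i := fun i => (hmin i).1
  have hbranch : ∀ i, sInf (J i) < (p i:ℝ) ∧ (p i:ℝ) ≤ pt i ∧ pt i < qt i ∧ qt i ≤ (q i:ℝ) := by
    intro i
    by_cases hhl : IsHalfLineInterval (pt i) (qt i)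
    · exact (h1 i).1 hhl
    · obtain ⟨a1, a2, a3, a4, _⟩ := (h1 i).2 hhl
      exact ⟨a1, a2, a3, a4⟩
  have hptqt : ∀ i, pt i < qt i := fun i => (hbranch i).2.2.1
  have hptpos : ∀ i, (0:ℝ) < pt i := fun i => by linarith [hpt1 i]
  have hqtpos : ∀ i, (0:ℝ) < qt i := fun i => by linarith [hpt1 i, hptqt i]
  have hJ1 : ∀ i, J i ⊆ Set.Ioi 1 := fun i =>
    maxJ_subset_Ioi1 (Si S i) (pt i) (qt i) (J i) (hpt1 i) (hptqt i).le (hmax i) (he i)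
  have hsInf1 : ∀ i, 1 ≤ sInf (J i) := by
    intro i
    apply le_csInf ⟨pt i, (hmax i).2.1 ⟨le_refl _, (hptqt i).le⟩⟩
    intro r hr
    exact (hJ1 i hr).le
  have hp1 : ∀ i, (1:ℝ) < (p i:ℝ) := fun i => lt_of_le_of_lt (hsInf1 i) (hbranch i).1
  have hq1 : ∀ i, (1:ℝ) < (q i:ℝ) := fun i => by
    have h := hbranch i
    linarith [hp1 i, h.2.1, h.2.2.1, h.2.2.2]
  have hpRpos : ∀ i, (0:ℝ) < (p i:ℝ) := fun i => by linarith [hp1 i]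
  have hqRpos : ∀ i, (0:ℝ) < (q i:ℝ) := fun i => by linarith [hq1 i]
  have hpQpos : ∀ i, (0:ℚ) < p i := fun i => by
    have := hp1 i; exact_mod_cast lt_trans one_pos this
  have hqQpos : ∀ i, (0:ℚ) < q i := fun i => by
    have := hq1 i; exact_mod_cast lt_trans one_pos this
  have hpqQ : ∀ i, p i ≤ q i := fun i => by
    have h := hbranch i
    have : (p i:ℝ) ≤ (q i:ℝ) := by linarith [h.2.1, h.2.2.1, h.2.2.2]
    exact_mod_cast this
  -- integer data
  set Nn : ℕ := ∏ j, ((p j).num.toNat * (q j).num.toNat) with hNn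
  have hpnumT : ∀ i, 0 < (p i).num.toNat := fun i => by
    rw [Int.lt_toNat]; exact_mod_cast Rat.num_pos.mpr (hpQpos i)
  have hqnumT : ∀ i, 0 < (q i).num.toNat := fun i => by
    rw [Int.lt_toNat]; exact_mod_cast Rat.num_pos.mpr (hqQpos i)
  have hdvdp : ∀ i, (p i).num.toNat ∣ Nn := fun i =>
    dvd_trans (dvd_mul_right _ _) (Finset.dvd_prod_of_mem _ (Finset.mem_univ i))
  have hdvdq : ∀ i, (q i).num.toNat ∣ Nn := fun i =>
    dvd_trans (dvd_mul_left _ _) (Finset.dvd_prod_of_mem _ (Finset.mem_univ i))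
  have hNpos : 0 < Nn := Finset.prod_pos fun i _ => Nat.mul_pos (hpnumT i) (hqnumT i)
  have hNQ : (0:ℚ) < (Nn:ℚ) := by exact_mod_cast hNpos
  set F : Fin n → ℕ := fun i => (p i).den * (Nn / (p i).num.toNat) with hFdef
  set G : Fin n → ℕ := fun i => (q i).den * (Nn / (q i).num.toNat) with hGdef
  have hFkey : ∀ i, ((F i : ℕ):ℚ) * p i = Nn := fun i => rat_scale (p i) (hpQpos i) Nn (hdvdp i)
  have hGkey : ∀ i, ((G i : ℕ):ℚ) * q i = Nn := fun i => rat_scale (q i) (hqQpos i) Nn (hdvdq i)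
  have hFpos : ∀ i, 0 < F i := by
    intro i
    rcases Nat.eq_zero_or_pos (F i) with h | h
    · exfalso
      have hk := hFkey i
      rw [h] at hk
      push_cast at hk
      rw [zero_mul] at hk
      exact absurd hk.symm (ne_of_gt hNQ)
    · exact h
  have hGpos : ∀ i, 0 < G i := by
    intro i
    rcases Nat.eq_zero_or_pos (G i) with h | h
    · exfalso
      have hk := hGkey i
      rw [h] at hk
      push_cast at hk
      rw [zero_mul] at hk
      exact absurd hk.symm (ne_of_gt hNQ)
    · exact h
  have hGF : ∀ i, G i ≤ F i := by
    intro i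
    have h1' := hFkey i
    have h2' := hGkey i
    have h3' : ((G i:ℕ):ℚ) ≤ ((F i:ℕ):ℚ) := by
      nlinarith [hpQpos i, hqQpos i, hpqQ i, (by exact_mod_cast (hGpos i).le : (0:ℚ) ≤ (G i:ℕ))]
    exact_mod_cast h3'
  -- real bridges
  set Fz : Fin n → ℤ := fun i => ((F i : ℕ) : ℤ) with hFz
  set Gz : Fin n → ℤ := fun i => ((G i : ℕ) : ℤ) with hGz
  set Nz : ℤ := ((Nn : ℕ) : ℤ) with hNz
  have hNzpos : 0 < Nz := by rw [hNz]; exact_mod_cast hNpos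
  have hFzpos : ∀ i, 0 < Fz i := fun i => by
    show (0:ℤ) < ((F i : ℕ):ℤ); exact_mod_cast hFpos i
  have hGzpos : ∀ i, 0 < Gz i := fun i => by
    show (0:ℤ) < ((G i : ℕ):ℤ); exact_mod_cast hGpos i
  have hFkeyR : ∀ i, ((Fz i : ℤ):ℝ) * (p i:ℝ) = (Nz:ℝ) := by
    intro i
    have := hFkey i
    have h2' : (((F i:ℕ):ℚ) * p i : ℚ) = ((Nn:ℕ):ℚ) := this
    rw [hFz, hNz]
    exact_mod_cast congrArg (fun z : ℚ => (z:ℝ)) h2'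
  have hGkeyR : ∀ i, ((Gz i : ℤ):ℝ) * (q i:ℝ) = (Nz:ℝ) := by
    intro i
    have h2' : (((G i:ℕ):ℚ) * q i : ℚ) = ((Nn:ℕ):ℚ) := hGkey i
    rw [hGz, hNz]
    exact_mod_cast congrArg (fun z : ℚ => (z:ℝ)) h2'
  have hpeq : ∀ i, (p i:ℝ) = (Nz:ℝ)/((Fz i:ℤ):ℝ) := by
    intro i
    have hFne : ((Fz i:ℤ):ℝ) ≠ 0 := by
      have := hFzpos i
      exact_mod_cast ne_of_gt this
    rw [eq_div_iff hFne]
    rw [mul_comm]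
    exact hFkeyR i
  have hqeq : ∀ i, (q i:ℝ) = (Nz:ℝ)/((Gz i:ℤ):ℝ) := by
    intro i
    have hGne : ((Gz i:ℤ):ℝ) ≠ 0 := by
      have := hGzpos i
      exact_mod_cast ne_of_gt this
    rw [eq_div_iff hGne]
    rw [mul_comm]
    exact hGkeyR i
  have hbridgeP : ∀ x : Fin n → ℕ,
      ∑ i, (x i:ℝ)/(p i:ℝ) = ((∑ i, Fz i * (x i:ℤ) : ℤ):ℝ)/((Nz:ℤ):ℝ) := by
    intro x
    calc ∑ i, (x i:ℝ)/(p i:ℝ) = ∑ i, (x i:ℝ)/((Nz:ℝ)/((Fz i:ℤ):ℝ)) :=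
          Finset.sum_congr rfl fun i _ => by rw [← hpeq i]
      _ = ((∑ i, Fz i * (x i:ℤ) : ℤ):ℝ)/((Nz:ℤ):ℝ) := sum_div_bridge Fz Nz hNzpos hFzpos x
  have hbridgeQ : ∀ x : Fin n → ℕ,
      ∑ i, (x i:ℝ)/(q i:ℝ) = ((∑ i, Gz i * (x i:ℤ) : ℤ):ℝ)/((Nz:ℤ):ℝ) := by
    intro x
    calc ∑ i, (x i:ℝ)/(q i:ℝ) = ∑ i, (x i:ℝ)/((Nz:ℝ)/((Gz i:ℤ):ℝ)) :=
          Finset.sum_congr rfl fun i _ => by rw [← hqeq i]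
      _ = ((∑ i, Gz i * (x i:ℤ) : ℤ):ℝ)/((Nz:ℤ):ℝ) := sum_div_bridge Gz Nz hNzpos hGzpos x
  have hNzR : (0:ℝ) < (Nz:ℝ) := by exact_mod_cast hNzpos
  have hmemiff : ∀ x : Fin n → ℕ,
      ((∑ i, Fz i * (x i:ℤ)) % Nz ≤ ∑ i, (Fz i - Gz i) * (x i:ℤ)) ↔
      (∃ k : ℕ, (∑ i, (x i:ℝ)/(q i:ℝ)) ≤ k ∧ (k:ℝ) ≤ ∑ i, (x i:ℝ)/(p i:ℝ)) := by
    intro x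
    rw [mod_char Fz Gz Nz hNzpos (fun i => (hFzpos i).le) x]
    constructor
    · rintro ⟨k, hk1, hk2⟩
      refine ⟨k, ?_, ?_⟩
      · rw [hbridgeQ, div_le_iff₀ hNzR]
        exact_mod_cast hk1
      · rw [hbridgeP, le_div_iff₀ hNzR]
        exact_mod_cast hk2
    · rintro ⟨k, hk1, hk2⟩
      rw [hbridgeQ, div_le_iff₀ hNzR] at hk1
      rw [hbridgeP, le_div_iff₀ hNzR] at hk2
      exact ⟨k, by exact_mod_cast hk1, by exact_mod_cast hk2⟩
  -- polytope bounds
  have hPLq : ∀ y ∈ PL pt qt, ∑ i, y i / qt i ≤ 1 := by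
    intro y hy
    refine (convexHull_min ?_ (convex_sumdiv_le qt 1)) hy
    rintro v hv
    simp only [Set.mem_iUnion, Set.mem_insert_iff, Set.mem_singleton_iff] at hv
    obtain ⟨i, hv | hv⟩ := hv <;> subst hv <;>
      rw [Set.mem_setOf_eq, sum_single_div']
    · rw [div_le_one (hqtpos i)]
      exact (hptqt i).le
    · rw [div_self (ne_of_gt (hqtpos i))]
  have hPLp : ∀ y ∈ PL pt qt, 1 ≤ ∑ i, y i / pt i := by
    intro y hy
    refine (convexHull_min ?_ (convex_sumdiv_ge pt 1)) hy
    rintro v hv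
    simp only [Set.mem_iUnion, Set.mem_insert_iff, Set.mem_singleton_iff] at hv
    obtain ⟨i, hv | hv⟩ := hv <;> subst hv <;>
      rw [Set.mem_setOf_eq, sum_single_div']
    · rw [div_self (ne_of_gt (hptpos i))]
    · rw [le_div_iff₀ (hptpos i), one_mul]
      exact (hptqt i).le
  -- generators satisfy the interval condition
  have hPgen : ∀ s ∈ MinGenM S,
      ∃ k : ℕ, (∑ i, (s i:ℝ)/(q i:ℝ)) ≤ k ∧ (k:ℝ) ≤ ∑ i, (s i:ℝ)/(p i:ℝ) := by
    intro s hs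
    by_cases hθ : ∃ k : ℕ, castV s ∈ (k:ℝ) • PL pt qt
    · obtain ⟨k, hk⟩ := hθ
      obtain ⟨y, hy, hys⟩ := Set.mem_smul_set.mp hk
      have hcomp : ∀ i, (s i : ℝ) = (k:ℝ) * y i := by
        intro i
        have := congrFun hys i
        simpa [castV, Pi.smul_apply, smul_eq_mul] using this.symm
      have hsq : ∑ i, (s i:ℝ)/qt i ≤ (k:ℝ) := by
        have heq : ∑ i, (s i:ℝ)/qt i = (k:ℝ) * ∑ i, y i / qt i := by
          rw [Finset.mul_sum]
          exact Finset.sum_congr rfl fun i _ => by rw [hcomp i, mul_div_assoc]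
        rw [heq]
        calc (k:ℝ) * ∑ i, y i/qt i ≤ (k:ℝ) * 1 :=
              mul_le_mul_of_nonneg_left (hPLq y hy) (Nat.cast_nonneg k)
          _ = k := mul_one _
      have hsp : (k:ℝ) ≤ ∑ i, (s i:ℝ)/pt i := by
        have heq : ∑ i, (s i:ℝ)/pt i = (k:ℝ) * ∑ i, y i / pt i := by
          rw [Finset.mul_sum]
          exact Finset.sum_congr rfl fun i _ => by rw [hcomp i, mul_div_assoc]
        rw [heq]
        calc (k:ℝ) = (k:ℝ) * 1 := (mul_one _).symm
          _ ≤ (k:ℝ) * ∑ i, y i/pt i :=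
              mul_le_mul_of_nonneg_left (hPLp y hy) (Nat.cast_nonneg k)
      refine ⟨k, ?_, ?_⟩
      · calc ∑ i, (s i:ℝ)/(q i:ℝ) ≤ ∑ i, (s i:ℝ)/qt i :=
              sum_div_le_sum_div qt (fun i => (q i:ℝ)) hqtpos (fun i => (hbranch i).2.2.2) s
          _ ≤ k := hsq
      · calc (k:ℝ) ≤ ∑ i, (s i:ℝ)/pt i := hsp
          _ ≤ ∑ i, (s i:ℝ)/(p i:ℝ) :=
              sum_div_le_sum_div (fun i => (p i:ℝ)) pt hpRpos (fun i => (hbranch i).2.1) s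
    · obtain ⟨_, m, hm1, _, hL1, hL2⟩ := h3 s hs hθ
      have hmR : (0:ℝ) < (m:ℝ) := by exact_mod_cast hm1
      rw [hL_nonpos_iff hpRpos] at hL1
      rw [hL_nonneg_iff hqRpos] at hL2
      have hsump : ∑ i, ((s i:ℝ)/(m:ℝ))/(p i:ℝ) = (∑ i, (s i:ℝ)/(p i:ℝ))/(m:ℝ) := by
        rw [Finset.sum_div]
        exact Finset.sum_congr rfl fun i _ => by ring
      have hsumq : ∑ i, ((s i:ℝ)/(m:ℝ))/(q i:ℝ) = (∑ i, (s i:ℝ)/(q i:ℝ))/(m:ℝ) := by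
        rw [Finset.sum_div]
        exact Finset.sum_congr rfl fun i _ => by ring
      rw [hsump, le_div_iff₀ hmR, one_mul] at hL1
      rw [hsumq, div_le_iff₀ hmR, one_mul] at hL2
      exact ⟨m, hL2, hL1⟩
  -- every element of S satisfies the interval condition
  have hPall : ∀ x ∈ S,
      ∃ k : ℕ, (∑ i, (x i:ℝ)/(q i:ℝ)) ≤ k ∧ (k:ℝ) ≤ ∑ i, (x i:ℝ)/(p i:ℝ) := by
    have key : ∀ N : ℕ, ∀ x, x ∈ S → (∑ i, x i) = N →
        ∃ k : ℕ, (∑ i, (x i:ℝ)/(q i:ℝ)) ≤ k ∧ (k:ℝ) ≤ ∑ i, (x i:ℝ)/(p i:ℝ) := by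
      intro N
      induction N using Nat.strong_induction_on with
      | _ N IH =>
        intro x hx hxN
        by_cases hx0 : x = 0
        · subst hx0
          exact ⟨0, by simp, by simp⟩
        by_cases hgen : x ∈ MinGenM S
        · exact hPgen x hgen
        · have hdecomp : ∃ u, u ∈ S ∧ ∃ v, v ∈ S ∧ u ≠ 0 ∧ v ≠ 0 ∧ u + v = x := by
            by_contra hcon
            push_neg at hcon
            exact hgen ⟨hx, hx0, fun u hu v hv hu0 hv0 =>
              (hcon u hu v hv hu0 hv0)⟩
          obtain ⟨u, hu, v, hv, hu0, hv0, huv⟩ := hdecomp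
          have hsum : (∑ i, u i) + (∑ i, v i) = N := by
            rw [← hxN, ← huv]
            rw [← Finset.sum_add_distrib]
            exact Finset.sum_congr rfl fun i _ => rfl
          have hupos : 1 ≤ ∑ i, u i := by
            obtain ⟨j, hj⟩ := Function.ne_iff.mp hu0
            calc 1 ≤ u j := Nat.pos_of_ne_zero (by simpa using hj)
              _ ≤ ∑ i, u i := Finset.single_le_sum (fun i _ => Nat.zero_le _) (Finset.mem_univ j)
          have hvpos : 1 ≤ ∑ i, v i := by
            obtain ⟨j, hj⟩ := Function.ne_iff.mp hv0
            calc 1 ≤ v j := Nat.pos_of_ne_zero (by simpa using hj)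
              _ ≤ ∑ i, v i := Finset.single_le_sum (fun i _ => Nat.zero_le _) (Finset.mem_univ j)
          obtain ⟨k1, hk1a, hk1b⟩ := IH (∑ i, u i) (by omega) u hu rfl
          obtain ⟨k2, hk2a, hk2b⟩ := IH (∑ i, v i) (by omega) v hv rfl
          have hsq : ∑ i, (x i:ℝ)/(q i:ℝ)
              = ∑ i, (u i:ℝ)/(q i:ℝ) + ∑ i, (v i:ℝ)/(q i:ℝ) := by
            rw [← Finset.sum_add_distrib]
            apply Finset.sum_congr rfl
            intro i _
            rw [← huv]
            push_cast [Pi.add_apply]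
            ring
          have hsp : ∑ i, (x i:ℝ)/(p i:ℝ)
              = ∑ i, (u i:ℝ)/(p i:ℝ) + ∑ i, (v i:ℝ)/(p i:ℝ) := by
            rw [← Finset.sum_add_distrib]
            apply Finset.sum_congr rfl
            intro i _
            rw [← huv]
            push_cast [Pi.add_apply]
            ring
          refine ⟨k1 + k2, ?_, ?_⟩
          · rw [hsq]; push_cast; linarith
          · rw [hsp]; push_cast; linarith
    exact fun x hx => key (∑ i, x i) x hx rfl
  -- gaps violate the interval condition
  have hgap : ∀ x : Fin n → ℕ, x ∉ S →
      ¬ ∃ k : ℕ, (∑ i, (x i:ℝ)/(q i:ℝ)) ≤ k ∧ (k:ℝ) ≤ ∑ i, (x i:ℝ)/(p i:ℝ) := by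
    intro x hx
    obtain ⟨k₀, hk₀1, hk₀φ, hk₀H⟩ := hcov x hx
    have hAfin : (Sᶜ ∩ Hset pt qt k₀).Finite := hfin.subset Set.inter_subset_left
    have hxA : x ∈ Sᶜ ∩ Hset pt qt k₀ := ⟨hx, hk₀H⟩
    by_cases hk1 : k₀ = 1
    · subst hk1
      have hpos := extend_pos hpRpos 1 _ hAfin h2a x hxA
      rw [hL_pos_iff hpRpos] at hpos
      simp only [castV] at hpos
      rintro ⟨k, hka, hkb⟩
      have hk0 : k = 0 := by
        have h' : (k:ℝ) < 1 := lt_of_le_of_lt hkb hpos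
        have : k < 1 := by exact_mod_cast h'
        omega
      subst hk0
      push_cast at hka
      have hx0 : x ≠ 0 := fun h => hx (h ▸ h0)
      obtain ⟨j, hj⟩ := Function.ne_iff.mp hx0
      have hterm : (0:ℝ) < (x j:ℝ)/(q j:ℝ) := by
        apply div_pos _ (hqRpos j)
        exact_mod_cast Nat.pos_of_ne_zero (by simpa using hj)
      have hsumpos : (0:ℝ) < ∑ i, (x i:ℝ)/(q i:ℝ) :=
        lt_of_lt_of_le hterm (Finset.single_le_sum
          (f := fun i => (x i:ℝ)/(q i:ℝ))
          (fun i _ => div_nonneg (Nat.cast_nonneg _) (hqRpos i).le) (Finset.mem_univ j))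
      linarith
    · have hk2 : 2 ≤ k₀ := by omega
      have h2b' := h2b k₀ hk2 hk₀φ
      have hpos := extend_pos hpRpos (k₀:ℝ) _ hAfin (fun v hv => (h2b' v hv).1) x hxA
      have hneg := extend_neg hqRpos ((k₀:ℝ)-1) _ hAfin (fun v hv => (h2b' v hv).2) x hxA
      rw [hL_pos_iff hpRpos] at hpos
      rw [hL_neg_iff hqRpos] at hneg
      simp only [castV] at hpos hneg
      rintro ⟨k, hka, hkb⟩
      have h1' : (k:ℝ) < k₀ := lt_of_le_of_lt hkb hpos
      have h2' : (k₀:ℝ) - 1 < k := lt_of_lt_of_le hneg hka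
      have h3' : k < k₀ := by exact_mod_cast h1'
      have h4' : k₀ < k + 1 := by
        have : (k₀:ℝ) < (k:ℝ) + 1 := by linarith
        exact_mod_cast this
      omega
  -- final assembly
  refine ⟨Fz, fun i => Fz i - Gz i, Nz, hNzpos, ?_⟩
  ext x
  simp only [Set.mem_setOf_eq]
  rw [hmemiff x]
  constructor
  · intro hxS
    exact hPall x hxS
  · intro hmem
    by_contra hxS
    exact hgap x hxS hmem



/-- **Corollary.** Let `S` be an `ℕⁿ`-semigroup with `eᵢ ∉ S` and `Sᵢ` a proportionally
modular numerical semigroup for all `i ∈ [n]`. Then `S` is a proportionally modular affine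
semigroup iff for some minimal intervals `[p̃ᵢ,q̃ᵢ] ∈ L̃_{Sᵢ}` (with maximal open intervals
`]p̂ᵢ,q̂ᵢ[`), `ℕⁿ∖S ⊆ ⋃_{k=1}^{φ(L̃)} ℍ_{kL̃}` and there are rationals `pᵢ,qᵢ` satisfying the
inequalities (1), (2) and (3) of the corollary. -/
theorem stmt5 (n : ℕ) (S : Set (Fin n → ℕ)) (h0 : (0 : Fin n → ℕ) ∈ S)
    (hadd : ∀ x ∈ S, ∀ y ∈ S, x + y ∈ S) (hfin : Sᶜ.Finite)
    (he : ∀ i, Pi.single i 1 ∉ S)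
    (hSi : ∀ i, ∃ p q : ℝ, 1 < p ∧ p ≤ q ∧ Si S i = NSet (Set.Icc p q)) :
    (∃ (f g : Fin n → ℤ) (b : ℤ), 0 < b ∧
      S = {x : Fin n → ℕ | (∑ i, f i * (x i : ℤ)) % b ≤ ∑ i, g i * (x i : ℤ)}) ↔
    (∃ (pt qt : Fin n → ℝ) (J : Fin n → Set ℝ),
      (∀ i, IsMinimalInterval (Si S i) (pt i) (qt i)) ∧
      (∀ i, IsMaxOpenInterval (Si S i) (pt i) (qt i) (J i)) ∧
      (∀ x : Fin n → ℕ, x ∉ S → ∃ k : ℕ, 1 ≤ k ∧ k ≤ phiN pt qt ∧ x ∈ Hset pt qt k) ∧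
      ∃ p q : Fin n → ℚ,
        -- (1)
        (∀ i, (IsHalfLineInterval (pt i) (qt i) →
            sInf (J i) < (p i : ℝ) ∧ (p i : ℝ) ≤ pt i ∧ pt i < qt i ∧ qt i ≤ (q i : ℝ)) ∧
          (¬ IsHalfLineInterval (pt i) (qt i) →
            sInf (J i) < (p i : ℝ) ∧ (p i : ℝ) ≤ pt i ∧ pt i < qt i ∧ qt i ≤ (q i : ℝ) ∧
            (q i : ℝ) < sSup (J i))) ∧
        -- (2)
        (∀ x ∈ VSet (castV '' (Sᶜ ∩ Hset pt qt 1)),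
          0 < hL (fun i => (p i : ℝ)) 1 x) ∧
        (∀ k : ℕ, 2 ≤ k → k ≤ phiN pt qt →
          ∀ x ∈ VSet (castV '' (Sᶜ ∩ Hset pt qt k)),
            0 < hL (fun i => (p i : ℝ)) (k : ℝ) x ∧
            hL (fun i => (q i : ℝ)) ((k : ℝ) - 1) x < 0) ∧
        -- (3)
        (∀ s ∈ MinGenM S, (¬ ∃ k : ℕ, castV s ∈ (k : ℝ) • PL pt qt) →
          kappa (∑ j, (s j : ℝ) / sInf (J j)) ≠ 0 ∧
          ∃ m : ℕ, 1 ≤ m ∧ (m : ℤ) ≤ kappa (∑ j, (s j : ℝ) / sInf (J j)) ∧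
            hL (fun i => (p i : ℝ)) 1 (fun i => (s i : ℝ) / (m : ℝ)) ≤ 0 ∧
            0 ≤ hL (fun i => (q i : ℝ)) 1 (fun i => (s i : ℝ) / (m : ℝ)))) := by
  constructor
  · rintro ⟨f, g, b, hb, hS⟩
    exact forward_dir n S h0 hfin he f g b hb hS
  · intro hR
    exact backward_dir n S h0 hfin he hR

end
end

section
/- Let S ≠ ℕ² be the proportionally modular ℕ²-semigroup defined by f₁x₁+f₂x₂ mod b ≤ g₁x₁+g₂x₂, where b > 0, 0 ≤ f₁, f₂ < b, g₁, g₂ > 0, f₁ > g₁ and g₂ ≥ f₂ (so that 1 ∈ S₂). For every k ∈ ℕ with 0 < k < f₁/g₁ let A_k = (b/(f₁g₂−f₂g₁))·(kg₂−f₂, f₁−kg₁), let T_k be the triangle ConvexHull{(kb/f₁, 0), ((k−1)b/(f₁−g₁), 0), A_k}, and let T̈_k = T_k ∖ (the closed segment from ((k−1)b/(f₁−g₁),0) to A_k together with the closed segment from (kb/f₁,0) to A_k). Then, for every α ∈ ℕ², α ∈ S if and only if α ∉ ⋃_{k=1}^{⌊f₁/g₁⌋} T̈_k. -/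
/-- The proportionally modular `ℕ²`-semigroup of `f₁x₁+f₂x₂ mod b ≤ g₁x₁+g₂x₂`. -/
def S6 (f₁ f₂ g₁ g₂ b : ℤ) : Set (ℕ × ℕ) :=
  {x | (f₁ * (x.1 : ℤ) + f₂ * (x.2 : ℤ)) % b ≤ g₁ * (x.1 : ℤ) + g₂ * (x.2 : ℤ)}

/-- `A_k = (b/(f₁g₂−f₂g₁))·(kg₂−f₂, f₁−kg₁)`, the intersection point of the lines
`g₁x₁+g₂x₂ = b` and `f₁x₁+f₂x₂ = kb`. -/
noncomputable def A6 (f₁ f₂ g₁ g₂ b : ℤ) (k : ℕ) : ℝ × ℝ :=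
  ((b : ℝ) / ((f₁ : ℝ) * g₂ - (f₂ : ℝ) * g₁) * ((k : ℝ) * g₂ - f₂),
   (b : ℝ) / ((f₁ : ℝ) * g₂ - (f₂ : ℝ) * g₁) * ((f₁ : ℝ) - (k : ℝ) * g₁))

/-- The triangle `T_k = ConvexHull{(kb/f₁,0), ((k−1)b/(f₁−g₁),0), A_k}`. -/
noncomputable def T6 (f₁ f₂ g₁ g₂ b : ℤ) (k : ℕ) : Set (ℝ × ℝ) :=
  convexHull ℝ {(((k : ℝ) * b / f₁, 0) : ℝ × ℝ),
    ((((k : ℝ) - 1) * b / ((f₁ : ℝ) - g₁), 0) : ℝ × ℝ), A6 f₁ f₂ g₁ g₂ b k}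

/-- `T̈_k`: the triangle `T_k` minus its two slanted closed edges. -/
noncomputable def Tdot6 (f₁ f₂ g₁ g₂ b : ℤ) (k : ℕ) : Set (ℝ × ℝ) :=
  T6 f₁ f₂ g₁ g₂ b k \
    (segment ℝ (((((k : ℝ) - 1) * b / ((f₁ : ℝ) - g₁), 0) : ℝ × ℝ)) (A6 f₁ f₂ g₁ g₂ b k) ∪
     segment ℝ ((((k : ℝ) * b / f₁, 0) : ℝ × ℝ)) (A6 f₁ f₂ g₁ g₂ b k))

lemma core_mem (F1 F2 G1 G2 B K : ℝ) (hb : 0 < B) (hg1 : 0 < G1) (hfg1 : G1 < F1)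
    (hD : 0 < F1 * G2 - F2 * G1) (hk : K * G1 < F1)
    (P Q A : ℝ × ℝ)
    (hP1 : P.1 = K * B / F1) (hP2 : P.2 = 0)
    (hQ1 : Q.1 = (K - 1) * B / (F1 - G1)) (hQ2 : Q.2 = 0)
    (hA1 : A.1 = B / (F1 * G2 - F2 * G1) * (K * G2 - F2))
    (hA2 : A.2 = B / (F1 * G2 - F2 * G1) * (F1 - K * G1))
    (p : ℝ × ℝ) (h2 : 0 ≤ p.2) (h3 : F1 * p.1 + F2 * p.2 < K * B)
    (h4 : (K - 1) * B < (F1 - G1) * p.1 + (F2 - G2) * p.2) :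
    p ∈ convexHull ℝ {P, Q, A} \ (segment ℝ Q A ∪ segment ℝ P A) := by
  have hf1 : 0 < F1 := hg1.trans hfg1
  have hfg : 0 < F1 - G1 := by linarith
  have hkk : 0 < F1 - K * G1 := by linarith
  have hE0 : 0 < B * (F1 - K * G1) := mul_pos hb hkk
  have hkk0 : F1 - G1 * K ≠ 0 := by linarith
  have hD0 : F1 * G2 - G1 * F2 ≠ 0 := by linarith
  set cA := p.2 * (F1 * G2 - F2 * G1) / (B * (F1 - K * G1)) with hcA
  set cQ := (K * B - (F1 * p.1 + F2 * p.2)) * (F1 - G1) / (B * (F1 - K * G1)) with hcQ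
  set cP := ((F1 - G1) * p.1 + (F2 - G2) * p.2 - (K - 1) * B) * F1 / (B * (F1 - K * G1)) with hcP
  have hcA0 : 0 ≤ cA := div_nonneg (mul_nonneg h2 hD.le) hE0.le
  have hcQ0 : 0 < cQ := div_pos (mul_pos (by linarith) hfg) hE0
  have hcP0 : 0 < cP := div_pos (mul_pos (by linarith) hf1) hE0
  have hsum : cP + cQ + cA = 1 := by
    rw [hcP, hcQ, hcA]; field_simp; ring
  have hx1 : cP * P.1 + cQ * Q.1 + cA * A.1 = p.1 := by
    rw [hcP, hcQ, hcA, hP1, hQ1, hA1]; field_simp; ring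
  have hx2 : cP * P.2 + cQ * Q.2 + cA * A.2 = p.2 := by
    rw [hcP, hcQ, hcA, hP2, hQ2, hA2]; field_simp; ring
  have hw : 0 < cQ + cA := by linarith
  have hw0 : cQ + cA ≠ 0 := ne_of_gt hw
  constructor
  · rw [show ({P, Q, A} : Set (ℝ × ℝ)) = insert P {Q, A} from rfl,
      convexHull_insert ⟨Q, Set.mem_insert _ _⟩, convexHull_pair, mem_convexJoin]
    refine ⟨P, rfl, (cQ / (cQ + cA)) • Q + (cA / (cQ + cA)) • A,
      ⟨cQ / (cQ + cA), cA / (cQ + cA), by positivity, by positivity, by field_simp, rfl⟩,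
      ⟨cP, cQ + cA, hcP0.le, hw.le, by linarith, ?_⟩⟩
    have hz : (cQ + cA) • ((cQ / (cQ + cA)) • Q + (cA / (cQ + cA)) • A) = cQ • Q + cA • A := by
      rw [smul_add, smul_smul, smul_smul, mul_div_cancel₀ _ hw0, mul_div_cancel₀ _ hw0]
    rw [hz]
    apply Prod.ext
    · simpa [smul_eq_mul, add_assoc] using hx1
    · simpa [smul_eq_mul, add_assoc] using hx2
  · rintro (hseg | hseg)
    · obtain ⟨a, c, ha, hc, hac, heq⟩ := hseg
      have e1 : a * Q.1 + c * A.1 = p.1 := by rw [← heq]; simp [smul_eq_mul]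
      have e2 : a * Q.2 + c * A.2 = p.2 := by rw [← heq]; simp [smul_eq_mul]
      simp only [hQ1, hQ2, hA1, hA2] at e1 e2
      have ha' : a = 1 - c := by linarith
      subst ha'
      have : (F1 - G1) * p.1 + (F2 - G2) * p.2 = (K - 1) * B := by
        rw [← e1, ← e2]; field_simp; ring
      linarith
    · obtain ⟨a, c, ha, hc, hac, heq⟩ := hseg
      have e1 : a * P.1 + c * A.1 = p.1 := by rw [← heq]; simp [smul_eq_mul]
      have e2 : a * P.2 + c * A.2 = p.2 := by rw [← heq]; simp [smul_eq_mul]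
      simp only [hP1, hP2, hA1, hA2] at e1 e2
      have ha' : a = 1 - c := by linarith
      subst ha'
      have : F1 * p.1 + F2 * p.2 = K * B := by
        rw [← e1, ← e2]; field_simp; ring
      linarith


lemma core_sub (F1 F2 G1 G2 B K : ℝ) (hb : 0 < B) (hg1 : 0 < G1) (hfg1 : G1 < F1)
    (hD : 0 < F1 * G2 - F2 * G1) (hk : K * G1 ≤ F1)
    (P Q A : ℝ × ℝ)
    (hP1 : P.1 = K * B / F1) (hP2 : P.2 = 0)
    (hQ1 : Q.1 = (K - 1) * B / (F1 - G1)) (hQ2 : Q.2 = 0)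
    (hA1 : A.1 = B / (F1 * G2 - F2 * G1) * (K * G2 - F2))
    (hA2 : A.2 = B / (F1 * G2 - F2 * G1) * (F1 - K * G1))
    (p : ℝ × ℝ)
    (hp : p ∈ convexHull ℝ {P, Q, A} \ (segment ℝ Q A ∪ segment ℝ P A)) :
    F1 * p.1 + F2 * p.2 < K * B ∧ (K - 1) * B < (F1 - G1) * p.1 + (F2 - G2) * p.2 := by
  have hf1 : 0 < F1 := hg1.trans hfg1
  have hfg : 0 < F1 - G1 := by linarith
  obtain ⟨hpT, hpN⟩ := hp
  rw [show ({P, Q, A} : Set (ℝ × ℝ)) = insert P {Q, A} from rfl,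
    convexHull_insert ⟨Q, Set.mem_insert _ _⟩, convexHull_pair, mem_convexJoin] at hpT
  obtain ⟨P', hP', z, hz, hpz⟩ := hpT
  rw [Set.mem_singleton_iff] at hP'
  rw [hP'] at hpz
  obtain ⟨s, t, hs, ht, hst, hzeq⟩ := hz
  obtain ⟨u, v, hu, hv, huv, hpeq⟩ := hpz
  have hu' : u = 1 - v := by linarith
  have hs' : s = 1 - t := by linarith
  subst hu' hs'
  -- degenerate case is impossible
  have hAP : ¬ (F1 - K * G1 = 0) := by
    intro hdeg
    have hA'1 : A.1 = P.1 := by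
      rw [hA1, hP1]
      have hD0 : F1 * G2 - G1 * F2 ≠ 0 := by linarith
      field_simp
      linear_combination (-F2) * hdeg
    have hA'2 : A.2 = P.2 := by rw [hA2, hP2, hdeg, mul_zero]
    have hAP' : A = P := Prod.ext hA'1 hA'2
    apply hpN
    left
    refine ⟨v * (1 - t), (1 - v) + v * t, by nlinarith, by nlinarith, by ring, ?_⟩
    rw [← hpeq, ← hzeq, hAP']
    module
  have hkk : 0 < F1 - K * G1 := lt_of_le_of_ne (by linarith) (fun h => hAP h.symm)
  have hkk0 : F1 - G1 * K ≠ 0 := by linarith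
  have hD0 : F1 * G2 - G1 * F2 ≠ 0 := by linarith
  have e1 : p.1 = (1 - v) * P.1 + v * ((1 - t) * Q.1 + t * A.1) := by
    rw [← hpeq, ← hzeq]; simp [smul_eq_mul]; ring
  have e2 : p.2 = (1 - v) * P.2 + v * ((1 - t) * Q.2 + t * A.2) := by
    rw [← hpeq, ← hzeq]; simp [smul_eq_mul]; ring
  have I1 : K * B - (F1 * p.1 + F2 * p.2) = v * (1 - t) * (B * (F1 - K * G1) / (F1 - G1)) := by
    rw [e1, e2]; simp only [hP1, hP2, hQ1, hQ2, hA1, hA2]; field_simp; ring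
  have I2 : (F1 - G1) * p.1 + (F2 - G2) * p.2 - (K - 1) * B = (1 - v) * (B * (F1 - K * G1) / F1) := by
    rw [e1, e2]; simp only [hP1, hP2, hQ1, hQ2, hA1, hA2]; field_simp; ring
  have hpos : 0 < B * (F1 - K * G1) / (F1 - G1) := by positivity
  have hpos2 : 0 < B * (F1 - K * G1) / F1 := by positivity
  constructor
  · -- strict: F1 p1 + F2 p2 < K B
    rcases lt_or_eq_of_le (le_of_sub_nonneg (by rw [I1]; positivity)) with h | h
    · linarith [h]
    · -- K*B = L1 p, so v*(1-t) = 0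
      exfalso
      have hvt : v * (1 - t) = 0 := by
        have h0 : v * (1 - t) * (B * (F1 - K * G1) / (F1 - G1)) = 0 := by
          rw [← I1]; linarith
        exact (mul_eq_zero.mp h0).resolve_right (ne_of_gt hpos)
      rcases mul_eq_zero.mp hvt with hv0 | ht1
      · -- v = 0 : p = P
        apply hpN
        right
        have hpP : p = P := by rw [← hpeq, hv0]; simp
        rw [hpP]
        exact left_mem_segment ℝ P A
      · -- t = 1 : z = A
        apply hpN
        right
        have hzA : z = A := by
          rw [← hzeq, show (1:ℝ) - t = 0 from by linarith, show t = 1 from by linarith]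
          simp
        exact ⟨1 - v, v, hu, hv, by ring, by rw [← hzA]; exact hpeq⟩
  · rcases lt_or_eq_of_le (le_of_sub_nonneg (by rw [I2]; positivity)) with h | h
    · linarith [h]
    · exfalso
      have hv1 : 1 - v = 0 := by
        have h0 : (1 - v) * (B * (F1 - K * G1) / F1) = 0 := by
          rw [← I2]; linarith
        exact (mul_eq_zero.mp h0).resolve_right (ne_of_gt hpos2)
      apply hpN
      left
      have hpz' : p = z := by rw [← hpeq, hv1, show v = 1 from by linarith]; simp
      exact ⟨1 - t, t, hs, ht, by ring, by rw [hpz']; exact hzeq⟩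

/-- **Lemma.** Let `S ≠ ℕ²` be the proportionally modular `ℕ²`-semigroup of
`f₁x₁+f₂x₂ mod b ≤ g₁x₁+g₂x₂` with `b > 0`, `0 ≤ f₁,f₂ < b`, `g₁,g₂ > 0`, `f₁ > g₁`,
`g₂ ≥ f₂` (so that `1 ∈ S₂`). Then for all `α ∈ ℕ²`:
`α ∈ S ↔ α ∉ ⋃_{k∈[⌊f₁/g₁⌋]} T̈_k`. -/
theorem stmt6 (f₁ f₂ g₁ g₂ b : ℤ) (hb : 0 < b)
    (hf₁ : 0 ≤ f₁ ∧ f₁ < b) (hf₂ : 0 ≤ f₂ ∧ f₂ < b)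
    (hg₁ : 0 < g₁) (hg₂ : 0 < g₂) (hfg₁ : g₁ < f₁) (hfg₂ : f₂ ≤ g₂)
    (hproper : S6 f₁ f₂ g₁ g₂ b ≠ Set.univ) :
    ∀ α : ℕ × ℕ, α ∈ S6 f₁ f₂ g₁ g₂ b ↔
      ¬ ∃ k : ℕ, 1 ≤ k ∧ (k : ℤ) ≤ ⌊(f₁ : ℝ) / (g₁ : ℝ)⌋ ∧
        (((α.1 : ℝ), (α.2 : ℝ)) : ℝ × ℝ) ∈ Tdot6 f₁ f₂ g₁ g₂ b k := by
  obtain ⟨hf10, hf1b⟩ := hf₁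
  obtain ⟨hf20, hf2b⟩ := hf₂
  have hDz : (0:ℤ) < f₁ * g₂ - f₂ * g₁ := by nlinarith
  have hbR : (0:ℝ) < (b:ℝ) := by exact_mod_cast hb
  have hg1R : (0:ℝ) < (g₁:ℝ) := by exact_mod_cast hg₁
  have hfg1R : ((g₁:ℝ)) < (f₁:ℝ) := by exact_mod_cast hfg₁
  have hDR : (0:ℝ) < (f₁:ℝ) * (g₂:ℝ) - (f₂:ℝ) * (g₁:ℝ) := by exact_mod_cast hDz
  intro α
  constructor
  · rintro hS ⟨k, hk1, hkle, hkT⟩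
    simp only [S6, Set.mem_setOf_eq] at hS
    have hkg : (k:ℤ) * g₁ ≤ f₁ := by
      have h1 : ((k:ℤ):ℝ) ≤ (f₁:ℝ) / (g₁:ℝ) := Int.le_floor.mp hkle
      rw [le_div_iff₀ hg1R] at h1
      exact_mod_cast h1
    simp only [Tdot6, T6, A6] at hkT
    obtain ⟨h3, h4⟩ := core_sub (f₁:ℝ) (f₂:ℝ) (g₁:ℝ) (g₂:ℝ) (b:ℝ) (k:ℝ) hbR hg1R hfg1R hDR
      (by exact_mod_cast hkg) _ _ _ rfl rfl rfl rfl rfl rfl _ hkT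
    simp only [] at h3 h4
    have h3z : f₁ * (α.1:ℤ) + f₂ * (α.2:ℤ) < (k:ℤ) * b := by
      have : (f₁:ℝ) * (α.1:ℕ) + (f₂:ℝ) * (α.2:ℕ) < (k:ℝ) * (b:ℝ) := h3
      exact_mod_cast this
    have h4z : ((k:ℤ) - 1) * b < (f₁ - g₁) * (α.1:ℤ) + (f₂ - g₂) * (α.2:ℤ) := by
      have : ((k:ℝ) - 1) * (b:ℝ) < ((f₁:ℝ) - g₁) * (α.1:ℕ) + ((f₂:ℝ) - g₂) * (α.2:ℕ) := h4
      have hk1' : (1:ℤ) ≤ (k:ℤ) := by exact_mod_cast hk1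
      push_cast at this ⊢
      exact_mod_cast this
    set F := f₁ * (α.1:ℤ) + f₂ * (α.2:ℤ) with hF
    set G := g₁ * (α.1:ℤ) + g₂ * (α.2:ℤ) with hG
    have hG0 : 0 ≤ G := by
      rw [hG]
      have := Int.natCast_nonneg α.1
      have := Int.natCast_nonneg α.2
      positivity
    have hFG : (f₁ - g₁) * (α.1:ℤ) + (f₂ - g₂) * (α.2:ℤ) = F - G := by rw [hF, hG]; ring
    have h5 : ((k:ℤ) - 1) * b < F - G := by rw [← hFG]; exact h4z
    have key : F % b = F - ((k:ℤ) - 1) * b := by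
      have h0 : 0 ≤ F - ((k:ℤ) - 1) * b := by linarith
      have h1 : F - ((k:ℤ) - 1) * b < b := by linarith
      conv_lhs => rw [show F = F - ((k:ℤ) - 1) * b + ((k:ℤ) - 1) * b by ring]
      rw [Int.add_mul_emod_self_right, Int.emod_eq_of_lt h0 h1]
    rw [key] at hS
    linarith
  · intro hn
    simp only [S6, Set.mem_setOf_eq]
    by_contra hS
    push_neg at hS
    set F := f₁ * (α.1:ℤ) + f₂ * (α.2:ℤ) with hF
    set G := g₁ * (α.1:ℤ) + g₂ * (α.2:ℤ) with hG
    have hF0 : 0 ≤ F := by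
      rw [hF]
      have := Int.natCast_nonneg α.1
      have := Int.natCast_nonneg α.2
      positivity
    have hG0 : 0 ≤ G := by
      rw [hG]
      have := Int.natCast_nonneg α.1
      have := Int.natCast_nonneg α.2
      positivity
    have hq0 : 0 ≤ F / b := Int.ediv_nonneg hF0 hb.le
    have hr0 : 0 ≤ F % b := Int.emod_nonneg F (ne_of_gt hb)
    have hrb : F % b < b := Int.emod_lt_of_pos F hb
    have hqr : b * (F / b) + F % b = F := Int.mul_ediv_add_emod F b
    have hGb : G < b := lt_of_lt_of_le hS hrb.le
    have hcomm : (F / b) * b = b * (F / b) := mul_comm _ _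
    have h5 : (F / b) * b < F - G := by linarith
    have hmono : (f₂ - g₂) * (α.2:ℤ) ≤ 0 :=
      mul_nonpos_of_nonpos_of_nonneg (by linarith) (Int.natCast_nonneg _)
    have hFG : (f₁ - g₁) * (α.1:ℤ) + (f₂ - g₂) * (α.2:ℤ) = F - G := by rw [hF, hG]; ring
    have hqb0 : 0 ≤ (F / b) * b := mul_nonneg hq0 hb.le
    have hx1pos : 0 < (α.1:ℤ) := by
      rcases lt_or_eq_of_le (Int.natCast_nonneg α.1) with h | h
      · exact h
      · exfalso
        have hz : (α.1:ℤ) = 0 := h.symm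
        have : F - G ≤ 0 := by rw [← hFG, hz]; simpa using hmono
        linarith
    have hga : g₁ * (α.1:ℤ) ≤ G := by
      rw [hG]
      nlinarith [mul_nonneg hg₂.le (Int.natCast_nonneg α.2)]
    have hmain : ((F / b) * g₁) * (α.1:ℤ) < (f₁ - g₁) * (α.1:ℤ) := by
      calc ((F / b) * g₁) * (α.1:ℤ) = (F / b) * (g₁ * (α.1:ℤ)) := by ring
        _ ≤ (F / b) * b := mul_le_mul_of_nonneg_left (by linarith) hq0
        _ < F - G := h5
        _ ≤ (f₁ - g₁) * (α.1:ℤ) := by rw [← hFG]; linarith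
    have hkg' : (F / b) * g₁ < f₁ - g₁ :=
      lt_of_mul_lt_mul_right hmain (Int.natCast_nonneg _)
    set k : ℕ := (F / b).toNat + 1 with hk
    have hkz : (k:ℤ) = F / b + 1 := by
      rw [hk]
      push_cast [Int.toNat_of_nonneg hq0]
      ring
    have hkgs : (k:ℤ) * g₁ < f₁ := by rw [hkz]; nlinarith
    have hFlt : F < (k:ℤ) * b := by
      have : ((F / b) + 1) * b = b * (F / b) + b := by ring
      rw [hkz]
      linarith
    have hFgt : ((k:ℤ) - 1) * b < F - G := by
      have : ((k:ℤ) - 1) * b = (F / b) * b := by rw [hkz]; ring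
      linarith
    apply hn
    refine ⟨k, Nat.le_add_left 1 _, ?_, ?_⟩
    · rw [Int.le_floor, le_div_iff₀ hg1R]
      have : ((k:ℤ):ℝ) * (g₁:ℝ) ≤ (f₁:ℝ) := by exact_mod_cast hkgs.le
      exact_mod_cast this
    · simp only [Tdot6, T6, A6]
      refine core_mem (f₁:ℝ) (f₂:ℝ) (g₁:ℝ) (g₂:ℝ) (b:ℝ) (k:ℝ) hbR hg1R hfg1R hDR
        (by exact_mod_cast hkgs) _ _ _ rfl rfl rfl rfl rfl rfl _ ?_ ?_ ?_
      · show (0:ℝ) ≤ (α.2:ℕ)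
        positivity
      · show (f₁:ℝ) * (α.1:ℕ) + (f₂:ℝ) * (α.2:ℕ) < (k:ℝ) * (b:ℝ)
        have : f₁ * (α.1:ℤ) + f₂ * (α.2:ℤ) < (k:ℤ) * b := by rw [← hF]; exact hFlt
        exact_mod_cast this
      · show ((k:ℝ) - 1) * (b:ℝ) < ((f₁:ℝ) - g₁) * (α.1:ℕ) + ((f₂:ℝ) - g₂) * (α.2:ℕ)
        have hz : ((k:ℤ) - 1) * b < (f₁ - g₁) * (α.1:ℤ) + (f₂ - g₂) * (α.2:ℤ) := by
          rw [hFG]; exact hFgt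
        have hk1' : (1:ℤ) ≤ (k:ℤ) := by rw [hkz]; linarith
        push_cast at hz ⊢
        exact_mod_cast hz
end

section
/- Let f(x) = f₁x₁+⋯+fₙxₙ and g(x) = g₁x₁+⋯+gₙxₙ be linear functions with integer coefficients, b a positive integer, and suppose 0 ≤ f_i < b for all i ∈ [n]. Then the set {x ∈ ℕⁿ : 0 ≤ g(x) < b} is the disjoint union of ⋃_{i≥1} (F_i⁻ ∩ D_{i−1}⁺ ∩ G_0⁺) ∩ ℕⁿ and ⋃_{i∈ℕ} (F_i⁺ ∩ D_i⁻ ∩ G_b⁻) ∩ ℕⁿ; in particular these two unions are disjoint and ℕⁿ ∩ G_0⁺ ∩ G_b⁻ = ⋃_{i≥1} (F_i⁻ ∩ D_{i−1}⁺ ∩ G_0⁺) ∪ ⋃_{i∈ℕ} (F_i⁺ ∩ D_i⁻ ∩ G_b⁻) intersected with ℕⁿ. -/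
/-!
Put `F = f(x)` and `G = g(x)`; since `fᵢ ≥ 0` we have `F ≥ 0`, so `F` lies in a unique window
`q b ≤ F < (q + 1) b` with `q ∈ ℕ`. For `0 ≤ G < b` the point `F - G` is then either `≤ q b`
(the piece `F_q⁺ ∩ D_q⁻ ∩ G_b⁻`) or `> q b` (the piece `F_{q+1}⁻ ∩ D_q⁺ ∩ G_0⁺`). Conversely each piece
forces `0 ≤ G < b`, and the two families are disjoint because `F_i⁻ ∩ F_j⁺ ≠ ∅` needs `j < i`,
whereas `D_{i-1}⁺ ∩ D_j⁻ ≠ ∅` needs `j > i - 1`.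
-/

/-- The union over `i ≥ 1` of `F_i⁻ ∩ D_{i−1}⁺ ∩ G_0⁺`, read at `F = f(x)`, `G = g(x)`. -/
def InLowerPiece (b F G : ℤ) : Prop :=
  ∃ i : ℕ, 1 ≤ i ∧ F < i * b ∧ (i - 1) * b < F - G ∧ 0 ≤ G

/-- The union over `i ∈ ℕ` of `F_i⁺ ∩ D_i⁻ ∩ G_b⁻`, read at `F = f(x)`, `G = g(x)`. -/
def InUpperPiece (b F G : ℤ) : Prop :=
  ∃ i : ℕ, i * b ≤ F ∧ F - G ≤ i * b ∧ G < b

section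

variable {b F G : ℤ}

theorem exists_nat_mul_le_lt_succ_mul (hb : 0 < b) (hF : 0 ≤ F) :
    ∃ q : ℕ, q * b ≤ F ∧ F < (q + 1) * b := by
  obtain ⟨q, hq⟩ := Int.eq_ofNat_of_zero_le (Int.ediv_nonneg hF hb.le)
  exact ⟨q, hq ▸ Int.ediv_mul_le F hb.ne', hq ▸ Int.lt_ediv_add_one_mul_self F hb⟩

theorem inLowerPiece_or_inUpperPiece (hb : 0 < b) (hF : 0 ≤ F) (hG₀ : 0 ≤ G) (hGb : G < b) :
    InLowerPiece b F G ∨ InUpperPiece b F G := by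
  obtain ⟨q, hqF, hFq⟩ := exists_nat_mul_le_lt_succ_mul hb hF
  rcases le_or_gt (F - G) (q * b) with hD | hD
  · exact Or.inr ⟨q, hqF, hD, hGb⟩
  · refine Or.inl ⟨q + 1, le_add_self, ?_, ?_, hG₀⟩ <;> push_cast
    · exact hFq
    · simpa using hD

theorem InLowerPiece.nonneg_and_lt (h : InLowerPiece b F G) : 0 ≤ G ∧ G < b := by
  obtain ⟨i, -, hF, hD, hG₀⟩ := h
  exact ⟨hG₀, by linarith⟩

theorem InUpperPiece.nonneg_and_lt (h : InUpperPiece b F G) : 0 ≤ G ∧ G < b := by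
  obtain ⟨i, hF, hD, hGb⟩ := h
  exact ⟨by linarith, hGb⟩

theorem not_inLowerPiece_and_inUpperPiece (hb : 0 < b) :
    ¬(InLowerPiece b F G ∧ InUpperPiece b F G) := by
  rintro ⟨⟨i, -, hFi, hDi, -⟩, ⟨j, hFj, hDj, -⟩⟩
  have hji : (j : ℤ) ≤ i - 1 := by
    have : (j : ℤ) < i := lt_of_mul_lt_mul_right (hFj.trans_lt hFi) hb.le
    omega
  linarith [mul_le_mul_of_nonneg_right hji hb.le]

end

/-- With `f(x) = Σ fᵢxᵢ`, `g(x) = Σ gᵢxᵢ`, `b > 0` and `0 ≤ fᵢ < b` for all `i`, the set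
`{x ∈ ℕⁿ : 0 ≤ g(x) < b}` is the disjoint union of
`⋃_{i≥1} (Fᵢ⁻ ∩ D_{i−1}⁺ ∩ G₀⁺) ∩ ℕⁿ` and `⋃_{i∈ℕ} (Fᵢ⁺ ∩ Dᵢ⁻ ∩ G_b⁻) ∩ ℕⁿ`. -/
theorem stmt11 (n : ℕ) (f g : Fin n → ℤ) (b : ℤ) (hb : 0 < b)
    (hf : ∀ i, 0 ≤ f i ∧ f i < b) :
    ({x : Fin n → ℕ | 0 ≤ ∑ l, g l * (x l : ℤ) ∧ ∑ l, g l * (x l : ℤ) < b} =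
      {x : Fin n → ℕ | ∃ i : ℕ, 1 ≤ i ∧ (∑ l, f l * (x l : ℤ)) < (i : ℤ) * b ∧
          ((i : ℤ) - 1) * b < (∑ l, f l * (x l : ℤ)) - ∑ l, g l * (x l : ℤ) ∧
          0 ≤ ∑ l, g l * (x l : ℤ)} ∪
      {x : Fin n → ℕ | ∃ i : ℕ, (i : ℤ) * b ≤ (∑ l, f l * (x l : ℤ)) ∧
          (∑ l, f l * (x l : ℤ)) - ∑ l, g l * (x l : ℤ) ≤ (i : ℤ) * b ∧
          ∑ l, g l * (x l : ℤ) < b}) ∧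
    ({x : Fin n → ℕ | ∃ i : ℕ, 1 ≤ i ∧ (∑ l, f l * (x l : ℤ)) < (i : ℤ) * b ∧
          ((i : ℤ) - 1) * b < (∑ l, f l * (x l : ℤ)) - ∑ l, g l * (x l : ℤ) ∧
          0 ≤ ∑ l, g l * (x l : ℤ)} ∩
      {x : Fin n → ℕ | ∃ i : ℕ, (i : ℤ) * b ≤ (∑ l, f l * (x l : ℤ)) ∧
          (∑ l, f l * (x l : ℤ)) - ∑ l, g l * (x l : ℤ) ≤ (i : ℤ) * b ∧
          ∑ l, g l * (x l : ℤ) < b} = ∅) := by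
  have hF (x : Fin n → ℕ) : 0 ≤ ∑ l, f l * (x l : ℤ) :=
    Finset.sum_nonneg fun l _ => mul_nonneg (hf l).1 (Int.natCast_nonneg _)
  refine ⟨Set.ext fun x => ⟨fun hx => inLowerPiece_or_inUpperPiece hb (hF x) hx.1 hx.2, ?_⟩,
    Set.eq_empty_of_forall_notMem fun x hx => not_inLowerPiece_and_inUpperPiece hb hx⟩
  rintro (hx | hx)
  exacts [InLowerPiece.nonneg_and_lt hx, InUpperPiece.nonneg_and_lt hx]
end

section
/- Let S = {x ∈ ℕⁿ : f(x) mod b ≤ g(x)} be the proportionally modular affine semigroup defined by f₁x₁+⋯+fₙxₙ mod b ≤ g₁x₁+⋯+gₙxₙ with b > 0. If g_i > 0 for all i ∈ [n], then ℕⁿ ∖ S is a finite set; that is, S is an ℕⁿ-semigroup. -/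
/-!
Closure under addition comes from subadditivity of `· % b` on integers: `(u + v) % b` is
the residue of the nonnegative number `u % b + v % b`, hence at most it. Outside the
semigroup, `g(x) < f(x) % b < |b|`, and since every `gᵢ ≥ 1` this bounds each coordinate
of `x` by `|b|`.
-/

theorem Int.emod_le_self_of_nonneg {a : ℤ} (b : ℤ) (ha : 0 ≤ a) : a % b ≤ a := by
  lift a to ℕ using ha
  rw [← Int.emod_abs, ← Int.natCast_natAbs, ← Int.natCast_mod]
  exact_mod_cast Nat.mod_le a b.natAbs

theorem Int.add_emod_le_emod_add_emod (a c b : ℤ) : (a + c) % b ≤ a % b + c % b := by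
  rcases eq_or_ne b 0 with rfl | hb
  · simp
  rw [Int.add_emod]
  exact Int.emod_le_self_of_nonneg b (add_nonneg (Int.emod_nonneg a hb) (Int.emod_nonneg c hb))

namespace ProportionallyModular

variable {ι : Type*} [Fintype ι]

def linearForm (w : ι → ℤ) : (ι → ℕ) →+ ℤ where
  toFun x := ∑ i, w i * (x i : ℤ)
  map_zero' := by simp
  map_add' x y := by simp only [Pi.add_apply, Nat.cast_add, mul_add, Finset.sum_add_distrib]

theorem le_linearForm_of_pos {w : ι → ℤ} (hw : ∀ i, 0 < w i) (x : ι → ℕ) (i : ι) :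
    (x i : ℤ) ≤ linearForm w x :=
  calc (x i : ℤ) ≤ w i * x i := le_mul_of_one_le_left (Nat.cast_nonneg _) (hw i)
    _ ≤ ∑ j, w j * (x j : ℤ) :=
      Finset.single_le_sum (f := fun j ↦ w j * (x j : ℤ))
        (fun j _ ↦ mul_nonneg (hw j).le (Nat.cast_nonneg _)) (Finset.mem_univ i)

def semigroup (f g : ι → ℤ) (b : ℤ) : AddSubmonoid (ι → ℕ) where
  carrier := {x | linearForm f x % b ≤ linearForm g x}
  zero_mem' := by simp
  add_mem' {x y} hx hy := calc
    linearForm f (x + y) % b ≤ linearForm f x % b + linearForm f y % b := by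
      rw [map_add]
      exact Int.add_emod_le_emod_add_emod _ _ b
    _ ≤ linearForm g x + linearForm g y := add_le_add hx hy
    _ = linearForm g (x + y) := (map_add _ x y).symm

theorem finite_compl_semigroup (f : ι → ℤ) {g : ι → ℤ} {b : ℤ} (hb : b ≠ 0)
    (hg : ∀ i, 0 < g i) : ((semigroup f g b : Set (ι → ℕ))ᶜ).Finite := by
  refine (Set.Finite.pi fun _ ↦ Set.finite_Iio b.natAbs).subset fun x hx i _ ↦ ?_
  have hgx : linearForm g x < b.natAbs :=
    (not_le.mp hx : linearForm g x < linearForm f x % b).trans (Int.emod_lt _ hb)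
  show x i < b.natAbs
  exact_mod_cast (le_linearForm_of_pos hg x i).trans_lt hgx

end ProportionallyModular

/-- Let `S = {x ∈ ℕⁿ : f(x) mod b ≤ g(x)}` with `b > 0`. If `gᵢ > 0` for all `i`, then
`ℕⁿ ∖ S` is finite; that is, `S` is an `ℕⁿ`-semigroup (a submonoid of `ℕⁿ` with finite
complement). -/
theorem stmt14 (n : ℕ) (f g : Fin n → ℤ) (b : ℤ) (hb : 0 < b) (hg : ∀ i, 0 < g i) :
    ((0 : Fin n → ℕ) ∈ {x : Fin n → ℕ |
        (∑ i, f i * (x i : ℤ)) % b ≤ ∑ i, g i * (x i : ℤ)}) ∧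
    (∀ x ∈ {x : Fin n → ℕ | (∑ i, f i * (x i : ℤ)) % b ≤ ∑ i, g i * (x i : ℤ)},
      ∀ y ∈ {x : Fin n → ℕ | (∑ i, f i * (x i : ℤ)) % b ≤ ∑ i, g i * (x i : ℤ)},
        x + y ∈ {x : Fin n → ℕ | (∑ i, f i * (x i : ℤ)) % b ≤ ∑ i, g i * (x i : ℤ)}) ∧
    ({x : Fin n → ℕ | (∑ i, f i * (x i : ℤ)) % b ≤ ∑ i, g i * (x i : ℤ)}ᶜ).Finite :=
  ⟨(ProportionallyModular.semigroup f g b).zero_mem,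
    fun _ hx _ hy ↦ (ProportionallyModular.semigroup f g b).add_mem hx hy,
    ProportionallyModular.finite_compl_semigroup f hb.ne' hg⟩
end

section
/- Let p, q, γ₁, γ₂ be rational numbers with 0 ≤ γ₁ ≤ p, γ₂ > 0 and q > p > 0, let T = ConvexHull{(0,0),(p,0),(γ₁,γ₂)}, and let b be a positive integer such that f₁ = b/p, f₂ = b(p−γ₁)/(pγ₂), g₁ = b(q−p)/(pq) and g₂ = b(pq−γ₁(q−p))/(pqγ₂) are all integers. Then f₁ > g₁ > 0 and g₂ ≥ f₂ ≥ 0, the point (γ₁,γ₂) satisfies both f₁γ₁+f₂γ₂ = b and g₁γ₁+g₂γ₂ = b (so A₁ = (γ₁,γ₂)), and the triangle T₁ = ConvexHull{(b/f₁,0), (0,0), A₁} associated to the inequality f₁x₁+f₂x₂ mod b ≤ g₁x₁+g₂x₂ equals T. -/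
/-! Both coefficient gaps have closed forms, `f₁ - g₁ = b / q` and `g₂ - f₂ = b γ₁ / (q γ₂)`,
which are visibly nonnegative; the two line equations are identities in `p, q, γ₁, γ₂`; and
`b / f₁ = p`, so `T₁` has the same three vertices as `T`. -/

section Coefficients

variable {K : Type*} [Field K]

theorem div_sub_mul_sub_div_mul_eq_div (b : K) {p q : K} (hp : p ≠ 0) (hq : q ≠ 0) :
    b / p - b * (q - p) / (p * q) = b / q := by
  field_simp
  ring

theorem mul_sub_div_sub_mul_sub_div_eq (b : K) {p q γ₁ γ₂ : K} (hp : p ≠ 0) (hq : q ≠ 0)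
    (hγ₂ : γ₂ ≠ 0) :
    b * (p * q - γ₁ * (q - p)) / (p * q * γ₂) - b * (p - γ₁) / (p * γ₂) =
      b * γ₁ / (q * γ₂) := by
  field_simp
  ring

theorem div_mul_add_mul_sub_div_mul_eq (b : K) {p γ₂ : K} (γ₁ : K) (hp : p ≠ 0)
    (hγ₂ : γ₂ ≠ 0) :
    b / p * γ₁ + b * (p - γ₁) / (p * γ₂) * γ₂ = b := by
  field_simp
  ring

theorem mul_sub_div_mul_add_mul_sub_div_mul_eq (b : K) {p q γ₂ : K} (γ₁ : K) (hp : p ≠ 0)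
    (hq : q ≠ 0) (hγ₂ : γ₂ ≠ 0) :
    b * (q - p) / (p * q) * γ₁ + b * (p * q - γ₁ * (q - p)) / (p * q * γ₂) * γ₂ = b := by
  field_simp
  ring

end Coefficients

/-- From a triangle `T = ConvexHull{(0,0),(p,0),(γ₁,γ₂)}` with `0 ≤ γ₁ ≤ p`, `γ₂ > 0`,
`q > p > 0`, and `b > 0` making `f₁ = b/p`, `f₂ = b(p−γ₁)/(pγ₂)`, `g₁ = b(q−p)/(pq)` and
`g₂ = b(pq−γ₁(q−p))/(pqγ₂)` integers, one gets `f₁ > g₁ > 0`, `g₂ ≥ f₂ ≥ 0`, the point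
`(γ₁,γ₂)` lies on both lines `f₁x₁+f₂x₂ = b` and `g₁x₁+g₂x₂ = b` (so `A₁ = (γ₁,γ₂)`), and the
triangle `T₁ = ConvexHull{(b/f₁,0),(0,0),A₁}` of the inequality
`f₁x₁+f₂x₂ mod b ≤ g₁x₁+g₂x₂` equals `T`. -/
theorem stmt18 (p q γ₁ γ₂ : ℚ) (hγ₁ : 0 ≤ γ₁) (hγ₁p : γ₁ ≤ p) (hγ₂ : 0 < γ₂)
    (hp : 0 < p) (hpq : p < q) (b f₁ f₂ g₁ g₂ : ℤ) (hb : 0 < b)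
    (hf₁ : (f₁ : ℚ) = b / p) (hf₂ : (f₂ : ℚ) = b * (p - γ₁) / (p * γ₂))
    (hg₁ : (g₁ : ℚ) = b * (q - p) / (p * q))
    (hg₂ : (g₂ : ℚ) = b * (p * q - γ₁ * (q - p)) / (p * q * γ₂)) :
    g₁ < f₁ ∧ 0 < g₁ ∧ f₂ ≤ g₂ ∧ 0 ≤ f₂ ∧
    (f₁ : ℚ) * γ₁ + (f₂ : ℚ) * γ₂ = b ∧ (g₁ : ℚ) * γ₁ + (g₂ : ℚ) * γ₂ = b ∧
    convexHull ℝ {(((b : ℝ) / (f₁ : ℝ), 0) : ℝ × ℝ), ((0, 0) : ℝ × ℝ),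
        (((γ₁ : ℝ), (γ₂ : ℝ)) : ℝ × ℝ)} =
      convexHull ℝ {((0, 0) : ℝ × ℝ), (((p : ℝ), 0) : ℝ × ℝ),
        (((γ₁ : ℝ), (γ₂ : ℝ)) : ℝ × ℝ)} := by
  have hbQ : (0 : ℚ) < b := by exact_mod_cast hb
  have hq : 0 < q := hp.trans hpq
  have hqp : 0 < q - p := sub_pos.mpr hpq
  have hgap₁ : (0 : ℚ) < f₁ - g₁ := by
    rw [hf₁, hg₁, div_sub_mul_sub_div_mul_eq_div _ hp.ne' hq.ne']
    positivity
  have hgap₂ : (0 : ℚ) ≤ g₂ - f₂ := by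
    rw [hf₂, hg₂, mul_sub_div_sub_mul_sub_div_eq _ hp.ne' hq.ne' hγ₂.ne']
    positivity
  have hg₁_pos : (0 : ℚ) < g₁ := by rw [hg₁]; positivity
  have hf₂_nonneg : (0 : ℚ) ≤ f₂ := by
    rw [hf₂]
    exact div_nonneg (mul_nonneg hbQ.le (sub_nonneg.mpr hγ₁p)) (by positivity)
  have hb_div_f₁ : (b : ℝ) / f₁ = p := by
    have hf₁ℝ : (f₁ : ℝ) = b / p := by exact_mod_cast congrArg ((↑) : ℚ → ℝ) hf₁
    rw [hf₁ℝ, div_div_cancel₀ (by exact_mod_cast hb.ne')]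
  refine ⟨by exact_mod_cast sub_pos.mp hgap₁, by exact_mod_cast hg₁_pos,
    by exact_mod_cast sub_nonneg.mp hgap₂, by exact_mod_cast hf₂_nonneg, ?_, ?_, ?_⟩
  · rw [hf₁, hf₂]
    exact div_mul_add_mul_sub_div_mul_eq _ _ hp.ne' hγ₂.ne'
  · rw [hg₁, hg₂]
    exact mul_sub_div_mul_add_mul_sub_div_mul_eq _ _ hp.ne' hq.ne' hγ₂.ne'
  · rw [hb_div_f₁, Set.insert_comm]
end
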